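/- arXiv:1108.2427 — 7 statements merged into one kernel-verified Lean document; each statement's English description precedes it below -/
import Mathlib

section
/- Let L₁ and L₂ be regular languages over Σ. Then the hairpin completion H_κ(L₁,L₂) is linear context-free: there exists a context-free grammar G generating H_κ(L₁,L₂) in which the right-hand side of every production rule contains at most one nonterminal symbol. -/
/-- The antimorphic extension of an involution on letters to words. -/
def ovr {σ : Type} (bar : σ → σ) (w : List σ) : List σ := (w.map bar).reverse

/-- The hairpin completion `H_κ(L₁, L₂)`. -/
def hairpinCompletion {σ : Type} (bar : σ → σ) (κ : ℕ) (L1 L2 : Language σ) :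
    Language σ :=
  { π | ∃ γ α β : List σ,
      π = γ ++ α ++ β ++ ovr bar α ++ ovr bar γ ∧
      κ ≤ α.length ∧
      (γ ++ α ++ β ++ ovr bar α ∈ L1 ∨ α ++ β ++ ovr bar α ++ ovr bar γ ∈ L2) }

/-- A symbol is a nonterminal. -/
def isNonterminal {T N : Type*} : Symbol T N → Bool
  | Symbol.nonterminal _ => true
  | Symbol.terminal _ => false

/-!
A linear grammar produces `γ α β ᾱ γ̄` from the outside in, one pair `a … ā` per step. Its
nonterminals record the state an automaton has reached on the left part produced so far, together
with the state it must reach at the end of the word; a right-hand letter `b` is produced by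
replacing a target state `δ s b` by `s`, so the right part is read backwards. Running the product
of automata for `L₁` and `L₂`, the outer layer `γ … γ̄` advances only the `L₁` component on the left
and only the `L₂` component on the right, while the stem `α … ᾱ` and the loop `β` advance both.
A stem longer than `κ` can be cut down to exactly `κ` letters by moving its surplus into the loop,
so a bounded counter suffices for the stem.

Soundness is checked rule by rule: the languages the nonterminals are meant to derive are closed
under the rules, and this bounds every derivation.
-/

@[simp] lemma Language.mem_singleton_iff {T : Type*} {x w : List T} :
    x ∈ ({w} : Language T) ↔ x = w := Iff.rfl

namespace Symbol

variable {T N : Type*}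

def language (L : N → Language T) : Symbol T N → Language T
  | terminal t => {[t]}
  | nonterminal n => L n

@[simp] lemma language_terminal (L : N → Language T) (t : T) :
    (terminal t : Symbol T N).language L = {[t]} := rfl

@[simp] lemma language_nonterminal (L : N → Language T) (n : N) :
    (nonterminal n : Symbol T N).language L = L n := rfl

lemma prod_map_language_map_terminal (L : N → Language T) (w : List T) :
    ((w.map terminal).map (Symbol.language L)).prod = {w} := by
  induction w with
  | nil => rfl
  | cons a w ih =>
    ext x
    rw [List.map_cons, List.map_cons, List.prod_cons, ih]
    simp [Language.mem_mul, eq_comm]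

end Symbol

lemma ContextFreeRule.finite_setOf_output_length_le {T N : Type*} [Finite T] [Finite N] (n : ℕ) :
    {r : ContextFreeRule T N | r.output.length ≤ n}.Finite := by
  have := Fintype.ofFinite T
  have := Fintype.ofFinite N
  refine ((Set.finite_univ (α := N)).prod (List.finite_length_le (Symbol T N) n)).image
    (fun x => ⟨x.1, x.2⟩) |>.subset ?_
  intro r hr
  exact ⟨(r.input, r.output), ⟨trivial, hr⟩, rfl⟩

namespace ContextFreeGrammar

variable {T : Type*} {g : ContextFreeGrammar T} (L : g.NT → Language T)

lemma Derives.prod_map_language_le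
    (hL : ∀ r ∈ g.rules, (r.output.map (Symbol.language L)).prod ≤ L r.input)
    {u v : List (Symbol T g.NT)} (h : g.Derives u v) :
    (v.map (Symbol.language L)).prod ≤ (u.map (Symbol.language L)).prod := by
  induction h with
  | refl => exact le_rfl
  | tail _ hvw ih =>
    obtain ⟨r, hr, hrw⟩ := hvw
    obtain ⟨p, q, rfl, rfl⟩ := hrw.exists_parts
    refine le_trans ?_ ih
    simp only [List.map_append, List.prod_append, List.map_singleton, List.prod_singleton,
      Symbol.language_nonterminal]
    gcongr
    exact hL r hr

theorem language_le_of_forall_rules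
    (hL : ∀ r ∈ g.rules, (r.output.map (Symbol.language L)).prod ≤ L r.input) :
    g.language ≤ L g.initial := by
  intro w hw
  have := hw.prod_map_language_le L hL
  rw [Symbol.prod_map_language_map_terminal] at this
  simpa using this rfl

lemma derives_of_mem_rules {r : ContextFreeRule T g.NT} (hr : r ∈ g.rules) {u v w : List T}
    {n : g.NT} (hout : r.output = u.map .terminal ++ [.nonterminal n] ++ v.map .terminal)
    (hn : g.Derives [.nonterminal n] (w.map .terminal)) :
    g.Derives [.nonterminal r.input] ((u ++ w ++ v).map .terminal) := by
  have hprod : g.Produces [.nonterminal r.input] r.output := ⟨r, hr, .input_output⟩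
  refine hprod.trans_derives ?_
  rw [hout, List.map_append, List.map_append]
  exact (hn.append_left _).append_right _

end ContextFreeGrammar

lemma List.foldl_prodMk {α β γ : Type*} (f : α → γ → α) (g : β → γ → β) (x : α) (y : β)
    (w : List γ) : w.foldl (fun q c => (f q.1 c, g q.2 c)) (x, y) = (w.foldl f x, w.foldl g y) := by
  induction w generalizing x y <;> simp [*]

section ovr

variable {σ : Type} (bar : σ → σ)

@[simp] lemma ovr_nil : ovr bar [] = [] := rfl

@[simp] lemma ovr_append (x y : List σ) : ovr bar (x ++ y) = ovr bar y ++ ovr bar x := by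
  simp [ovr]

@[simp] lemma ovr_cons (a : σ) (w : List σ) : ovr bar (a :: w) = ovr bar w ++ [bar a] := by
  simp [ovr]

end ovr

lemma mem_hairpinCompletion_iff_length_eq {σ : Type} {bar : σ → σ} {κ : ℕ}
    {L1 L2 : Language σ} {w : List σ} :
    w ∈ hairpinCompletion bar κ L1 L2 ↔ ∃ γ α β : List σ,
      w = γ ++ α ++ β ++ ovr bar α ++ ovr bar γ ∧ α.length = κ ∧
      (γ ++ α ++ β ++ ovr bar α ∈ L1 ∨ α ++ β ++ ovr bar α ++ ovr bar γ ∈ L2) := by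
  constructor
  · rintro ⟨γ, α, β, rfl, hκ, hL⟩
    -- the part of `α` beyond its first `κ` letters moves into the loop `β`
    obtain ⟨α₁, α₂, rfl, hα₁⟩ : ∃ α₁ α₂, α = α₁ ++ α₂ ∧ α₁.length = κ :=
      ⟨α.take κ, α.drop κ, (α.take_append_drop κ).symm, by simpa using hκ⟩
    exact ⟨γ, α₁, α₂ ++ β ++ ovr bar α₂, by simp, hα₁, by simpa using hL⟩
  · rintro ⟨γ, α, β, rfl, hκ, hL⟩
    exact ⟨γ, α, β, rfl, hκ.ge, hL⟩

namespace HairpinGrammar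

open Symbol ContextFreeGrammar

variable {σ Q : Type} (bar : σ → σ) (κ : ℕ) (δL δ δR : Q → σ → Q) (q₀ : Q) (F : Set Q)

def hairpinsFrom (p : Q) (S : Set Q) : Language σ :=
  { w | ∃ γ α β : List σ, w = γ ++ α ++ β ++ ovr bar α ++ ovr bar γ ∧ α.length = κ ∧
      (ovr bar γ).foldl δR ((α ++ β ++ ovr bar α).foldl δ (γ.foldl δL p)) ∈ S }

inductive NT (Q : Type) (κ : ℕ) : Type
  | start
  | outer (p s : Q)
  | arm (p s : Q) (n : Fin (κ + 1))

instance [Finite Q] : Finite (NT Q κ) :=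
  Finite.of_surjective
    (fun x : Option (Q × Q ⊕ Q × Q × Fin (κ + 1)) => match x with
      | none => .start
      | some (.inl (p, s)) => .outer p s
      | some (.inr (p, s, n)) => .arm p s n)
    (by rintro (_ | ⟨p, s⟩ | ⟨p, s, n⟩)
        exacts [⟨none, rfl⟩, ⟨some (.inl (p, s)), rfl⟩, ⟨some (.inr (p, s, n)), rfl⟩])

inductive IsRule : ContextFreeRule σ (NT Q κ) → Prop
  | start {f : Q} (hf : f ∈ F) : IsRule ⟨.start, [nonterminal (.outer q₀ f)]⟩
  | outer (p s : Q) (a : σ) :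
      IsRule ⟨.outer p (δR s (bar a)),
        [terminal a, nonterminal (.outer (δL p a) s), terminal (bar a)]⟩
  | outerArm (p s : Q) : IsRule ⟨.outer p s, [nonterminal (.arm p s (Fin.last κ))]⟩
  | arm (p s : Q) (a : σ) (j : Fin κ) :
      IsRule ⟨.arm p (δ s (bar a)) j.succ,
        [terminal a, nonterminal (.arm (δ p a) s j.castSucc), terminal (bar a)]⟩
  | loop (p s : Q) (b : σ) : IsRule ⟨.arm p s 0, [terminal b, nonterminal (.arm (δ p b) s 0)]⟩
  | loopNil (p : Q) : IsRule ⟨.arm p p 0, []⟩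

def sem : NT Q κ → Language σ
  | .start => hairpinsFrom bar κ δL δ δR q₀ F
  | .outer p s => hairpinsFrom bar κ δL δ δR p {s}
  | .arm p s n => { w | ∃ α β : List σ, w = α ++ β ++ ovr bar α ∧ α.length = n ∧ w.foldl δ p = s }

lemma finite_setOf_isRule [Finite σ] [Finite Q] : {r | IsRule bar κ δL δ δR q₀ F r}.Finite :=
  (ContextFreeRule.finite_setOf_output_length_le 3).subset fun r hr => by cases hr <;> simp

noncomputable def grammar [Finite σ] [Finite Q] : ContextFreeGrammar σ where
  NT := NT Q κ
  initial := .start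
  rules := (finite_setOf_isRule bar κ δL δ δR q₀ F).toFinset

variable {bar κ δL δ δR q₀ F}

lemma mem_hairpinsFrom {p : Q} {S : Set Q} {w : List σ} :
    w ∈ hairpinsFrom bar κ δL δ δR p S ↔ ∃ γ α β : List σ,
      w = γ ++ α ++ β ++ ovr bar α ++ ovr bar γ ∧ α.length = κ ∧
      (ovr bar γ).foldl δR ((α ++ β ++ ovr bar α).foldl δ (γ.foldl δL p)) ∈ S :=
  Iff.rfl

lemma IsRule.countP_isNonterminal_le {r : ContextFreeRule σ (NT Q κ)}
    (hr : IsRule bar κ δL δ δR q₀ F r) : r.output.countP isNonterminal ≤ 1 := by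
  cases hr <;> simp [isNonterminal, List.countP_cons]

lemma IsRule.prod_map_language_le {r : ContextFreeRule σ (NT Q κ)}
    (hr : IsRule bar κ δL δ δR q₀ F r) :
    (r.output.map (Symbol.language (sem bar κ δL δ δR q₀ F))).prod
      ≤ sem bar κ δL δ δR q₀ F r.input := by
  cases hr with
  | start hf =>
    rintro _ ⟨w, ⟨γ, α, β, rfl, hα, rfl⟩, _, rfl, rfl⟩
    exact ⟨γ, α, β, by simp, hα, hf⟩
  | outer p s a =>
    rintro _ ⟨_, rfl, _, ⟨_, ⟨γ, α, β, rfl, hα, rfl⟩, _, ⟨_, rfl, _, rfl, rfl⟩, rfl⟩, rfl⟩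
    exact ⟨a :: γ, α, β, by simp, hα, by simp⟩
  | outerArm p s =>
    rintro _ ⟨_, ⟨α, β, rfl, hα, rfl⟩, _, rfl, rfl⟩
    exact ⟨[], α, β, by simp, by simpa using hα, by simp⟩
  | arm p s a j =>
    rintro _ ⟨_, rfl, _, ⟨_, ⟨α, β, rfl, hα, rfl⟩, _, ⟨_, rfl, _, rfl, rfl⟩, rfl⟩, rfl⟩
    exact ⟨a :: α, β, by simp, by simpa using hα, by simp⟩
  | loop p s b =>
    rintro _ ⟨_, rfl, _, ⟨_, ⟨α, β, rfl, hα, rfl⟩, _, rfl, rfl⟩, rfl⟩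
    obtain rfl : α = [] := List.length_eq_zero_iff.mp hα
    exact ⟨[], b :: β, by simp, rfl, by simp⟩
  | loopNil p =>
    rintro _ rfl
    exact ⟨[], [], rfl, rfl, rfl⟩

variable [Finite σ] [Finite Q]

lemma mem_rules {r : ContextFreeRule σ (NT Q κ)} :
    r ∈ (grammar bar κ δL δ δR q₀ F).rules ↔ IsRule bar κ δL δ δR q₀ F r :=
  Set.Finite.mem_toFinset _

lemma derives_loop (β : List σ) (p : Q) :
    (grammar bar κ δL δ δR q₀ F).Derives [nonterminal (.arm p (β.foldl δ p) 0)]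
      (β.map terminal) := by
  induction β generalizing p with
  | nil => exact Produces.single ⟨_, mem_rules.mpr (.loopNil p), .input_output⟩
  | cons b β ih =>
    simpa using derives_of_mem_rules (u := [b]) (v := []) (mem_rules.mpr (.loop p _ b)) rfl
      (ih (δ p b))

lemma derives_arm (β α : List σ) (p : Q) (n : Fin (κ + 1)) (hn : α.length = n) :
    (grammar bar κ δL δ δR q₀ F).Derives
      [nonterminal (.arm p ((α ++ β ++ ovr bar α).foldl δ p) n)]
      ((α ++ β ++ ovr bar α).map terminal) := by
  induction α generalizing p n with
  | nil =>
    obtain rfl : n = 0 := Fin.ext hn.symm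
    simpa using derives_loop β p
  | cons a α ih =>
    obtain ⟨j, rfl⟩ := Fin.exists_succ_eq_of_ne_zero (n := κ) (x := n) (by rintro rfl; simp at hn)
    have hrun : ((a :: α) ++ β ++ ovr bar (a :: α)).foldl δ p
        = δ ((α ++ β ++ ovr bar α).foldl δ (δ p a)) (bar a) := by simp
    rw [hrun]
    simpa using derives_of_mem_rules (u := [a]) (v := [bar a]) (mem_rules.mpr (.arm p _ a j)) rfl
      (ih (δ p a) j.castSucc (by simpa using hn))

lemma derives_outer {x : List σ}
    (hx : ∀ p, (grammar bar κ δL δ δR q₀ F).Derives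
      [nonterminal (.arm p (x.foldl δ p) (Fin.last κ))] (x.map terminal))
    (γ : List σ) (p : Q) :
    (grammar bar κ δL δ δR q₀ F).Derives
      [nonterminal (.outer p ((ovr bar γ).foldl δR (x.foldl δ (γ.foldl δL p))))]
      ((γ ++ x ++ ovr bar γ).map terminal) := by
  induction γ generalizing p with
  | nil =>
    simpa using derives_of_mem_rules (u := []) (v := []) (mem_rules.mpr (.outerArm p _)) rfl
      (hx p)
  | cons a γ ih =>
    have hrun : (ovr bar (a :: γ)).foldl δR (x.foldl δ ((a :: γ).foldl δL p))
        = δR ((ovr bar γ).foldl δR (x.foldl δ (γ.foldl δL (δL p a)))) (bar a) := by simp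
    rw [hrun]
    simpa using derives_of_mem_rules (u := [a]) (v := [bar a]) (mem_rules.mpr (.outer p _ a)) rfl
      (ih (δL p a))

theorem language_grammar :
    (grammar bar κ δL δ δR q₀ F).language = hairpinsFrom bar κ δL δ δR q₀ F := by
  refine le_antisymm (language_le_of_forall_rules _ fun r hr =>
    (mem_rules.mp hr).prod_map_language_le) ?_
  rintro _ ⟨γ, α, β, rfl, hα, hF⟩
  refine (mem_language_iff _ _).mpr ?_
  simpa [grammar] using derives_of_mem_rules (g := grammar bar κ δL δ δR q₀ F) (u := []) (v := [])
    (mem_rules.mpr (.start hF)) rfl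
    (derives_outer (fun p => derives_arm β α p (Fin.last κ) hα) γ q₀)

end HairpinGrammar

theorem hairpinCompletion_accepts_eq_hairpinsFrom {σ Q₁ Q₂ : Type} (bar : σ → σ) (κ : ℕ)
    (M₁ : DFA σ Q₁) (M₂ : DFA σ Q₂) :
    hairpinCompletion bar κ M₁.accepts M₂.accepts =
      HairpinGrammar.hairpinsFrom bar κ (fun q a => (M₁.step q.1 a, q.2))
        (fun q a => (M₁.step q.1 a, M₂.step q.2 a)) (fun q a => (q.1, M₂.step q.2 a))
        (M₁.start, M₂.start) {q | q.1 ∈ M₁.accept ∨ q.2 ∈ M₂.accept} := by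
  have hrun (γ x y : List σ) :
      y.foldl (fun q a => (q.1, M₂.step q.2 a))
        (x.foldl (fun q a => (M₁.step q.1 a, M₂.step q.2 a))
          (γ.foldl (fun q a => (M₁.step q.1 a, q.2)) (M₁.start, M₂.start)))
        = (M₁.eval (γ ++ x), M₂.eval (x ++ y)) := by
    simp only [List.foldl_prodMk M₁.step (fun q _ => q), List.foldl_prodMk M₁.step M₂.step,
      List.foldl_prodMk (fun q _ => q) M₂.step, List.foldl_fixed, DFA.eval, DFA.evalFrom,
      List.foldl_append]
  ext w
  simp only [mem_hairpinCompletion_iff_length_eq, HairpinGrammar.mem_hairpinsFrom, hrun,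
    Set.mem_ofPred_eq, DFA.mem_accepts, List.append_assoc]

theorem hairpin_completion_linear_context_free_general
    {σ : Type} [Fintype σ]
    (bar : σ → σ)
    (κ : ℕ)
    (L1 L2 : Language σ) (h1 : L1.IsRegular) (h2 : L2.IsRegular) :
    ∃ G : ContextFreeGrammar σ,
      G.language = hairpinCompletion bar κ L1 L2 ∧
      ∀ r ∈ G.rules, r.output.countP isNonterminal ≤ 1 := by
  obtain ⟨Q₁, _, M₁, rfl⟩ := h1
  obtain ⟨Q₂, _, M₂, rfl⟩ := h2
  rw [hairpinCompletion_accepts_eq_hairpinsFrom, ← HairpinGrammar.language_grammar]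
  exact ⟨_, rfl, fun r hr => (HairpinGrammar.mem_rules.mp hr).countP_isNonterminal_le⟩

theorem hairpin_completion_linear_context_free
    {σ : Type} [Fintype σ] (hσ : 2 ≤ Fintype.card σ)
    (bar : σ → σ) (hbar : ∀ a, bar (bar a) = a)
    (κ : ℕ) (hκ : 1 ≤ κ)
    (L1 L2 : Language σ) (h1 : L1.IsRegular) (h2 : L2.IsRegular) :
    ∃ G : ContextFreeGrammar σ,
      G.language = hairpinCompletion bar κ L1 L2 ∧
      ∀ r ∈ G.rules, r.output.countP isNonterminal ≤ 1 :=
  hairpin_completion_linear_context_free_general bar κ L1 L2 h1 h2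
end

section
/- Let L₁ and L₂ be languages over Σ. Every word π ∈ H_κ(L₁,L₂) admits a unique triple of words (γ, α, β) such that: (1) π = γ·α·β·overline(α)·overline(γ); (2) |α| = κ; (3) γ·α·β·overline(α) ∈ L₁ or α·β·overline(α)·overline(γ) ∈ L₂; (4) every prefix of π that belongs to L₁ is a prefix of γ·α·β·overline(α); and (5) every suffix of π that belongs to L₂ is a suffix of α·β·overline(α)·overline(γ). -/
/-- The canonical factorization `(γ, α, β)` of a word `π` of the hairpin completion. -/
def CanonFact {σ : Type} (bar : σ → σ) (κ : ℕ) (L1 L2 : Language σ)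
    (π γ α β : List σ) : Prop :=
  π = γ ++ α ++ β ++ ovr bar α ++ ovr bar γ ∧
  α.length = κ ∧
  (γ ++ α ++ β ++ ovr bar α ∈ L1 ∨ α ++ β ++ ovr bar α ++ ovr bar γ ∈ L2) ∧
  (∀ u : List σ, u <+: π → u ∈ L1 → u <+: γ ++ α ++ β ++ ovr bar α) ∧
  (∀ u : List σ, u <:+ π → u ∈ L2 → u <:+ α ++ β ++ ovr bar α ++ ovr bar γ)

/-!
A factorization `π = γ α β ᾱ γ̄` with `|α| = κ` is determined by `|γ|`, and if one exists with
`|γ| = g` then one exists for every smaller `g`: move the last letters of `γ` into `α` and push the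
surplus of `α` into `β`. Take the least `|γ|` whose factorization witnesses membership
(`γ α β ᾱ ∈ L₁` or `α β ᾱ γ̄ ∈ L₂`). A prefix of `π` in `L₁` longer than `γ α β ᾱ`, or a suffix in
`L₂` longer than `α β ᾱ γ̄`, would be such a witness for a shorter `γ`; conversely, conditions (4)
and (5) force `|γ|` to be least, which gives uniqueness.
-/

namespace Hairpin

variable {σ : Type}

section Ovr

variable (bar : σ → σ)

@[simp]
lemma length_ovr (w : List σ) : (ovr bar w).length = w.length := by
  simp [ovr]

lemma ovr_append (x y : List σ) : ovr bar (x ++ y) = ovr bar y ++ ovr bar x := by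
  simp [ovr]

lemma append_append_ovr_eq_take_drop (w b : List σ) (n : ℕ) :
    w ++ b ++ ovr bar w =
      w.take n ++ (w.drop n ++ b ++ ovr bar (w.drop n)) ++ ovr bar (w.take n) := by
  conv_lhs => rw [← List.take_append_drop n w, ovr_append]
  simp only [List.append_assoc]

def HasFactorizationAt (κ : ℕ) (π : List σ) (g : ℕ) : Prop :=
  ∃ γ α β : List σ, γ.length = g ∧ α.length = κ ∧
    π = γ ++ α ++ β ++ ovr bar α ++ ovr bar γ

/-- The two words tested are `γ α β ᾱ` and `α β ᾱ γ̄` of the factorization with `|γ| = g`. -/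
def IsAdmissibleDepth (κ : ℕ) (L1 L2 : Language σ) (π : List σ) (g : ℕ) : Prop :=
  HasFactorizationAt bar κ π g ∧ (π.take (π.length - g) ∈ L1 ∨ π.drop g ∈ L2)

end Ovr

variable {bar : σ → σ} {κ : ℕ}

lemma hasFactorizationAt_of_eq {π w b : List σ} {g : ℕ} (hπ : π = w ++ b ++ ovr bar w)
    (hw : g + κ ≤ w.length) : HasFactorizationAt bar κ π g := by
  set v := w.drop g
  refine ⟨w.take g, v.take κ, v.drop κ ++ b ++ ovr bar (v.drop κ), ?_, ?_, ?_⟩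
  · simp only [List.length_take]; omega
  · simp only [v, List.length_take, List.length_drop]; omega
  · rw [hπ, append_append_ovr_eq_take_drop bar w b g,
      append_append_ovr_eq_take_drop bar v b κ]
    simp only [List.append_assoc]

lemma HasFactorizationAt.mono {π : List σ} {g g' : ℕ} (h : HasFactorizationAt bar κ π g)
    (hle : g' ≤ g) : HasFactorizationAt bar κ π g' := by
  obtain ⟨γ, α, β, rfl, hα, rfl⟩ := h
  refine hasFactorizationAt_of_eq (w := γ ++ α) (b := β) ?_
    (by simp only [List.length_append]; omega)
  simp only [ovr_append, List.append_assoc]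

section Factorization

variable {π γ α β : List σ} (h : π = γ ++ α ++ β ++ ovr bar α ++ ovr bar γ)
include h

lemma length_eq_of_factorization : π.length = 2 * γ.length + 2 * α.length + β.length := by
  rw [h]; simp only [List.length_append, length_ovr]; omega

lemma prefix_of_factorization : γ ++ α ++ β ++ ovr bar α <+: π :=
  ⟨ovr bar γ, h.symm⟩

lemma suffix_of_factorization : α ++ β ++ ovr bar α ++ ovr bar γ <:+ π :=
  ⟨γ, by rw [h]; simp only [List.append_assoc]⟩

lemma take_eq_of_factorization : π.take (π.length - γ.length) = γ ++ α ++ β ++ ovr bar α := by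
  rw [h, List.take_left']
  simp only [List.length_append, length_ovr]; omega

lemma drop_eq_of_factorization : π.drop γ.length = α ++ β ++ ovr bar α ++ ovr bar γ := by
  rw [show π = γ ++ (α ++ β ++ ovr bar α ++ ovr bar γ) by rw [h]; simp only [List.append_assoc],
    List.drop_left]

end Factorization

lemma factorization_inj {γ α β γ' α' β' : List σ}
    (h : γ ++ α ++ β ++ ovr bar α ++ ovr bar γ = γ' ++ α' ++ β' ++ ovr bar α' ++ ovr bar γ')
    (hγ : γ.length = γ'.length) (hα : α.length = α'.length) :
    γ = γ' ∧ α = α' ∧ β = β' := by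
  simp only [List.append_assoc] at h
  obtain ⟨rfl, h⟩ := List.append_inj h hγ
  obtain ⟨rfl, h⟩ := List.append_inj h hα
  simpa using h

variable {L1 L2 : Language σ}

lemma isAdmissibleDepth_of_factorization {π γ α β : List σ}
    (h : π = γ ++ α ++ β ++ ovr bar α ++ ovr bar γ) (hα : α.length = κ)
    (hmem : γ ++ α ++ β ++ ovr bar α ∈ L1 ∨ α ++ β ++ ovr bar α ++ ovr bar γ ∈ L2) :
    IsAdmissibleDepth bar κ L1 L2 π γ.length := by
  refine ⟨⟨γ, α, β, rfl, hα, h⟩, ?_⟩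
  rwa [take_eq_of_factorization h, drop_eq_of_factorization h]

lemma exists_isAdmissibleDepth {π : List σ} (hπ : π ∈ hairpinCompletion bar κ L1 L2) :
    ∃ g, IsAdmissibleDepth bar κ L1 L2 π g := by
  obtain ⟨γ, α, β, h, hκ, hmem⟩ := hπ
  refine ⟨γ.length, hasFactorizationAt_of_eq (w := γ ++ α) (b := β) ?_
    (by simp only [List.length_append]; omega), ?_⟩
  · rw [h]; simp only [ovr_append, List.append_assoc]
  · rwa [take_eq_of_factorization h, drop_eq_of_factorization h]

section Least

variable {π γ α β : List σ} (h : π = γ ++ α ++ β ++ ovr bar α ++ ovr bar γ)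
include h

lemma prefix_of_isLeast (hleast : IsLeast {g | IsAdmissibleDepth bar κ L1 L2 π g} γ.length)
    {u : List σ} (hu : u <+: π) (hu1 : u ∈ L1) : u <+: γ ++ α ++ β ++ ovr bar α := by
  have hlen : (γ ++ α ++ β ++ ovr bar α).length = π.length - γ.length := by
    rw [← take_eq_of_factorization h, List.length_take]; omega
  refine List.prefix_of_prefix_length_le hu (prefix_of_factorization h) (hlen ▸ ?_)
  by_contra! hlong
  have hadm : IsAdmissibleDepth bar κ L1 L2 π (π.length - u.length) :=
    ⟨hleast.1.1.mono (by omega),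
      Or.inl (by rwa [Nat.sub_sub_self hu.length_le, ← List.prefix_iff_eq_take.mp hu])⟩
  have := hleast.2 hadm
  have := hu.length_le
  omega

lemma suffix_of_isLeast (hleast : IsLeast {g | IsAdmissibleDepth bar κ L1 L2 π g} γ.length)
    {u : List σ} (hu : u <:+ π) (hu2 : u ∈ L2) : u <:+ α ++ β ++ ovr bar α ++ ovr bar γ := by
  have hlen : (α ++ β ++ ovr bar α ++ ovr bar γ).length = π.length - γ.length := by
    rw [← drop_eq_of_factorization h, List.length_drop]
  refine List.suffix_of_suffix_length_le hu (suffix_of_factorization h) (hlen ▸ ?_)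
  by_contra! hlong
  have hadm : IsAdmissibleDepth bar κ L1 L2 π (π.length - u.length) :=
    ⟨hleast.1.1.mono (by omega), Or.inr (by rwa [← List.suffix_iff_eq_drop.mp hu])⟩
  have := hleast.2 hadm
  have := hu.length_le
  omega

lemma canonFact_of_isLeast (hα : α.length = κ)
    (hleast : IsLeast {g | IsAdmissibleDepth bar κ L1 L2 π g} γ.length) :
    CanonFact bar κ L1 L2 π γ α β := by
  refine ⟨h, hα, ?_, fun u hu => prefix_of_isLeast h hleast hu,
    fun u hu => suffix_of_isLeast h hleast hu⟩
  have hmem := hleast.1.2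
  rwa [take_eq_of_factorization h, drop_eq_of_factorization h] at hmem

end Least

lemma isLeast_of_canonFact {π γ α β : List σ} (hc : CanonFact bar κ L1 L2 π γ α β) :
    IsLeast {g | IsAdmissibleDepth bar κ L1 L2 π g} γ.length := by
  obtain ⟨h, hα, hmem, hpre, hsuf⟩ := hc
  refine ⟨isAdmissibleDepth_of_factorization h hα hmem, ?_⟩
  rintro g ⟨⟨γ', α', β', rfl, -, h'⟩, hmem' | hmem'⟩
  · have hle := (hpre _ (List.take_prefix _ _) hmem').length_le
    have := length_eq_of_factorization h
    have := length_eq_of_factorization h'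
    simp only [List.length_take, List.length_append, length_ovr] at hle
    omega
  · have hle := (hsuf _ (List.drop_suffix _ _) hmem').length_le
    have := length_eq_of_factorization h
    have := length_eq_of_factorization h'
    simp only [List.length_drop, List.length_append, length_ovr] at hle
    omega

end Hairpin

open Hairpin in
theorem hairpin_completion_unique_canonical_factorization_general
    {σ : Type}
    (bar : σ → σ)
    (κ : ℕ)
    (L1 L2 : Language σ)
    (π : List σ) (hπ : π ∈ hairpinCompletion bar κ L1 L2) :
    ∃! t : List σ × List σ × List σ,
      CanonFact bar κ L1 L2 π t.1 t.2.1 t.2.2 := by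
  classical
  have hleast := Nat.isLeast_find (exists_isAdmissibleDepth hπ)
  obtain ⟨γ, α, β, hγ, hα, h⟩ := hleast.1.1
  rw [← hγ] at hleast
  refine ⟨(γ, α, β), canonFact_of_isLeast h hα hleast, ?_⟩
  rintro ⟨γ', α', β'⟩ hc
  have hlen : γ'.length = γ.length := (isLeast_of_canonFact hc).unique hleast
  obtain ⟨rfl, rfl, rfl⟩ := factorization_inj (hc.1.symm.trans h) hlen (hc.2.1.trans hα.symm)
  rfl

theorem hairpin_completion_unique_canonical_factorization
    {σ : Type} [Fintype σ] (hσ : 2 ≤ Fintype.card σ)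
    (bar : σ → σ) (hbar : ∀ a, bar (bar a) = a)
    (κ : ℕ) (hκ : 1 ≤ κ)
    (L1 L2 : Language σ)
    (π : List σ) (hπ : π ∈ hairpinCompletion bar κ L1 L2) :
    ∃! t : List σ × List σ × List σ,
      CanonFact bar κ L1 L2 π t.1 t.2.1 t.2.2 :=
  hairpin_completion_unique_canonical_factorization_general bar κ L1 L2 π hπ
end

section
/- Let L₁ and L₂ be regular languages over Σ. Then the language MGP(L₁,L₂) of minimal gamma-alpha-prefixes of words of H_κ(L₁,L₂) is regular. -/
/-- The language of minimal gamma-alpha-prefixes of words of the hairpin completion. -/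
def MGP {σ : Type} (bar : σ → σ) (κ : ℕ) (L1 L2 : Language σ) : Language σ :=
  { p | ∃ π γ α β : List σ, π ∈ hairpinCompletion bar κ L1 L2 ∧
      CanonFact bar κ L1 L2 π γ α β ∧ p = γ ++ α }

/-- The language of middle factors of canonical factorizations of words
of the hairpin completion. -/
def Mid {σ : Type} (bar : σ → σ) (κ : ℕ) (L1 L2 : Language σ) : Language σ :=
  { β | ∃ π γ α : List σ, π ∈ hairpinCompletion bar κ L1 L2 ∧
      CanonFact bar κ L1 L2 π γ α β }

/-!
Fix DFAs `M₁`, `M₂` for `L₁`, `L₂`. Unfolding the canonical factorization, `γα ∈ MGP(L₁,L₂)`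
iff `|α| = κ` and for some `β` the word `γαβᾱ` is in `L₁` or `αβᾱγ̄` is in `L₂`, while no
`γαβᾱv` with `v` a nonempty prefix of `γ̄` is in `L₁` and no `wαβᾱγ̄` with `w` a nonempty suffix
of `γ` is in `L₂`. These conditions see `γ` only through finitely much data, all of which can be
updated letter by letter: the state of `M₁` after `γ`, the set of states of `M₁` from which some
nonempty prefix of `γ̄` leads to acceptance, the set of states of `M₂` reached by nonempty
suffixes of `γ`, and the state transformation of `M₂` induced by `γ̄`. An automaton keeping this
data for all but the last `κ` letters read, and those `κ` letters themselves, recognises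
`MGP(L₁,L₂)`.
-/

namespace List

variable {α : Type}

theorem forall_prefix_mem_imp_prefix_iff (L : Language α) (x y : List α) :
    (∀ u, u <+: x ++ y → u ∈ L → u <+: x) ↔ ∀ v, v <+: y → v ≠ [] → x ++ v ∉ L := by
  constructor
  · intro h v hv hne hmem
    have := (h _ ((prefix_append_right_inj x).2 hv) hmem).length_le
    simp only [length_append] at this
    exact hne (eq_nil_of_length_eq_zero (by omega))
  · intro h u hu hmem
    rcases prefix_or_prefix_of_prefix hu (prefix_append x y) with hux | ⟨v, rfl⟩
    · exact hux
    · by_cases hv : v = []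
      · simp [hv]
      · exact absurd hmem (h v ((prefix_append_right_inj x).1 hu) hv)

theorem forall_suffix_mem_imp_suffix_iff (L : Language α) (x y : List α) :
    (∀ u, u <:+ x ++ y → u ∈ L → u <:+ y) ↔ ∀ w, w <:+ x → w ≠ [] → w ++ y ∉ L := by
  constructor
  · intro h w hw hne hmem
    have := (h _ (suffix_append_self_iff.2 hw) hmem).length_le
    simp only [length_append] at this
    exact hne (eq_nil_of_length_eq_zero (by omega))
  · intro h u hu hmem
    rcases suffix_or_suffix_of_suffix hu (suffix_append x y) with huy | ⟨w, rfl⟩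
    · exact huy
    · by_cases hw : w = []
      · simp [hw]
      · exact absurd hmem (h w (suffix_append_self_iff.1 hu) hw)

theorem foldl_eq_of_concat {S : Type} {f : List α → S} {g : S → α → S}
    (hf : ∀ w a, f (w ++ [a]) = g (f w) a) (γ t : List α) :
    t.foldl g (f γ) = f (γ ++ t) := by
  induction t generalizing γ with
  | nil => simp
  | cons a t ih => rw [foldl_cons, ← hf, ih]; simp

end List

namespace DFA

variable {α Q : Type} (M : DFA α Q)

def prefixAccepting (u : List α) : Set Q :=
  {q | ∃ v, v <+: u ∧ v ≠ [] ∧ M.evalFrom q v ∈ M.accept}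

def suffixStates (u : List α) : Set Q :=
  M.eval '' {w | w <:+ u ∧ w ≠ []}

theorem prefixAccepting_cons (a : α) (u : List α) :
    M.prefixAccepting (a :: u) = (M.step · a) ⁻¹' (M.accept ∪ M.prefixAccepting u) := by
  ext q
  simp only [prefixAccepting, List.prefix_cons_iff, Set.mem_preimage, Set.mem_union,
    Set.mem_ofPred_eq]
  constructor
  · rintro ⟨v, rfl | ⟨t, rfl, ht⟩, hne, hacc⟩
    · exact absurd rfl hne
    · rw [evalFrom_cons] at hacc
      by_cases htn : t = []
      · subst htn; exact Or.inl hacc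
      · exact Or.inr ⟨t, ht, htn, hacc⟩
  · rintro (hacc | ⟨t, ht, -, hacc⟩)
    · exact ⟨[a], Or.inr ⟨[], rfl, List.nil_prefix⟩, by simp, hacc⟩
    · exact ⟨a :: t, Or.inr ⟨t, rfl, ht⟩, by simp, by rwa [evalFrom_cons]⟩

theorem suffixStates_concat (u : List α) (a : α) :
    M.suffixStates (u ++ [a]) = (M.step · a) '' insert M.start (M.suffixStates u) := by
  ext q
  simp only [suffixStates, List.suffix_concat_iff, Set.image_insert_eq, Set.mem_insert_iff,
    Set.mem_image, Set.mem_ofPred_eq]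
  constructor
  · rintro ⟨w, ⟨rfl | ⟨t, rfl, ht⟩, hne⟩, rfl⟩
    · exact absurd rfl hne
    · by_cases htn : t = []
      · subst htn; exact Or.inl rfl
      · exact Or.inr ⟨_, ⟨t, ⟨ht, htn⟩, rfl⟩, (eval_append_singleton M t a).symm⟩
  · rintro (rfl | ⟨_, ⟨t, ⟨ht, -⟩, rfl⟩, rfl⟩)
    · exact ⟨[a], ⟨Or.inr ⟨[], rfl, List.nil_suffix⟩, by simp⟩, rfl⟩
    · exact ⟨t ++ [a], ⟨Or.inr ⟨t, rfl, ht⟩, by simp⟩, eval_append_singleton M t a⟩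

variable {S : Type}

def window (g : S → α → S) (s₀ : S) (κ : ℕ) (P : S → List α → Prop) :
    DFA α (S × {w : List α // w.length ≤ κ}) where
  step x a :=
    let w := x.2.1 ++ [a]
    ((w.take (w.length - κ)).foldl g x.1, ⟨w.drop (w.length - κ), by simp; omega⟩)
  start := (s₀, ⟨[], by simp⟩)
  accept := {x | x.2.1.length = κ ∧ P x.1 x.2.1}

variable {f : List α → S} {g : S → α → S}

theorem eval_window (hf : ∀ w a, f (w ++ [a]) = g (f w) a) (κ : ℕ) (P : S → List α → Prop)
    (p : List α) :
    (window g (f []) κ P).eval p =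
      (f (p.take (p.length - κ)), ⟨p.drop (p.length - κ), by simp; omega⟩) := by
  induction p using List.reverseRecOn with
  | nil => ext <;> simp [window]
  | append_singleton p a ih =>
    rw [eval_append_singleton, ih]
    have hn : p.length - κ ≤ p.length := Nat.sub_le _ _
    have hk : p.length - κ + (((p ++ [a]).drop (p.length - κ)).length - κ) =
        (p ++ [a]).length - κ := by simp; omega
    ext : 1
    · simp only [window, List.foldl_eq_of_concat hf, ← List.drop_append_of_le_length hn,
        ← List.take_append_of_le_length (l₂ := [a]) hn, ← List.take_add, hk]
    · apply Subtype.ext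
      simp only [window, ← List.drop_append_of_le_length hn, List.drop_drop, hk]

theorem mem_accepts_window (hf : ∀ w a, f (w ++ [a]) = g (f w) a) (κ : ℕ)
    (P : S → List α → Prop) (p : List α) :
    p ∈ (window g (f []) κ P).accepts ↔ ∃ γ w, p = γ ++ w ∧ w.length = κ ∧ P (f γ) w := by
  rw [mem_accepts, eval_window hf]
  constructor
  · rintro ⟨hlen, hP⟩
    exact ⟨_, _, (List.take_append_drop _ p).symm, hlen, hP⟩
  · rintro ⟨γ, w, rfl, rfl, hP⟩
    have hγ : (γ ++ w).length - w.length = γ.length := by simp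
    simpa [window, hγ] using hP

end DFA

theorem Language.isRegular_of_window {α S : Type} [Finite α] [Finite S] {f : List α → S}
    {g : S → α → S} (hf : ∀ w a, f (w ++ [a]) = g (f w) a) (κ : ℕ) (P : S → List α → Prop) :
    Language.IsRegular {p | ∃ γ w, p = γ ++ w ∧ w.length = κ ∧ P (f γ) w} := by
  have : Finite {w : List α // w.length ≤ κ} := (List.finite_length_le α κ).to_subtype
  exact ⟨_, Fintype.ofFinite _, DFA.window g (f []) κ P,
    Set.ext (DFA.mem_accepts_window hf κ P)⟩

namespace Hairpin

variable {σ : Type} (bar : σ → σ)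

def IsCanonical (L1 L2 : Language σ) (γ α β : List σ) : Prop :=
  (γ ++ α ++ β ++ ovr bar α ∈ L1 ∨ α ++ β ++ ovr bar α ++ ovr bar γ ∈ L2) ∧
  (∀ v, v <+: ovr bar γ → v ≠ [] → γ ++ α ++ β ++ ovr bar α ++ v ∉ L1) ∧
  (∀ w, w <:+ γ → w ≠ [] → w ++ (α ++ β ++ ovr bar α ++ ovr bar γ) ∉ L2)

theorem canonFact_iff (κ : ℕ) (L1 L2 : Language σ) (π γ α β : List σ) :
    CanonFact bar κ L1 L2 π γ α β ↔
      π = γ ++ α ++ β ++ ovr bar α ++ ovr bar γ ∧ α.length = κ ∧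
        IsCanonical bar L1 L2 γ α β := by
  unfold CanonFact IsCanonical
  constructor
  · rintro ⟨rfl, hlen, hmem, hpre, hsuf⟩
    refine ⟨rfl, hlen, hmem, (List.forall_prefix_mem_imp_prefix_iff _ _ _).1 hpre,
      (List.forall_suffix_mem_imp_suffix_iff _ _ _).1 ?_⟩
    simpa only [List.append_assoc] using hsuf
  · rintro ⟨rfl, hlen, hmem, hpre, hsuf⟩
    refine ⟨rfl, hlen, hmem, (List.forall_prefix_mem_imp_prefix_iff _ _ _).2 hpre, ?_⟩
    simpa only [List.append_assoc] using (List.forall_suffix_mem_imp_suffix_iff _ _ _).2 hsuf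

theorem mem_MGP_iff (κ : ℕ) (L1 L2 : Language σ) (p : List σ) :
    p ∈ MGP bar κ L1 L2 ↔
      ∃ γ α, p = γ ++ α ∧ α.length = κ ∧ ∃ β, IsCanonical bar L1 L2 γ α β := by
  simp only [MGP, canonFact_iff]
  constructor
  · rintro ⟨_, γ, α, β, -, ⟨-, hlen, hcan⟩, rfl⟩
    exact ⟨γ, α, rfl, hlen, β, hcan⟩
  · rintro ⟨γ, α, rfl, hlen, β, hcan⟩
    exact ⟨_, γ, α, β, ⟨γ, α, β, rfl, hlen.ge, hcan.1⟩, ⟨rfl, hlen, hcan⟩, rfl⟩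

variable {Q1 Q2 : Type} (M1 : DFA σ Q1) (M2 : DFA σ Q2)

theorem ovr_concat (γ : List σ) (a : σ) : ovr bar (γ ++ [a]) = bar a :: ovr bar γ := by
  simp [ovr]

def summary (γ : List σ) : Q1 × Set Q1 × Set Q2 × (Q2 → Q2) :=
  (M1.eval γ, M1.prefixAccepting (ovr bar γ), M2.suffixStates γ,
    fun q => M2.evalFrom q (ovr bar γ))

def summaryStep (s : Q1 × Set Q1 × Set Q2 × (Q2 → Q2)) (a : σ) :
    Q1 × Set Q1 × Set Q2 × (Q2 → Q2) :=
  (M1.step s.1 a, (M1.step · (bar a)) ⁻¹' (M1.accept ∪ s.2.1),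
    (M2.step · a) '' insert M2.start s.2.2.1, fun q => s.2.2.2 (M2.step q (bar a)))

theorem summary_concat (γ : List σ) (a : σ) :
    summary bar M1 M2 (γ ++ [a]) = summaryStep bar M1 M2 (summary bar M1 M2 γ) a := by
  simp only [summary, summaryStep, DFA.eval_append_singleton, ovr_concat,
    DFA.prefixAccepting_cons, DFA.suffixStates_concat, DFA.evalFrom_cons]

def SummaryAccepts (s : Q1 × Set Q1 × Set Q2 × (Q2 → Q2)) (α : List σ) : Prop :=
  ∃ β, let m := α ++ β ++ ovr bar α
    (M1.evalFrom s.1 m ∈ M1.accept ∨ s.2.2.2 (M2.eval m) ∈ M2.accept) ∧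
      M1.evalFrom s.1 m ∉ s.2.1 ∧ ∀ q ∈ s.2.2.1, s.2.2.2 (M2.evalFrom q m) ∉ M2.accept

theorem summaryAccepts_summary_iff (γ α : List σ) :
    SummaryAccepts bar M1 M2 (summary bar M1 M2 γ) α ↔
      ∃ β, IsCanonical bar M1.accepts M2.accepts γ α β := by
  simp only [SummaryAccepts, IsCanonical, summary, DFA.prefixAccepting, DFA.suffixStates,
    DFA.mem_accepts, DFA.eval, ← DFA.evalFrom_of_append, List.append_assoc, Set.mem_ofPred_eq,
    Set.forall_mem_image, not_exists, not_and, and_imp]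

end Hairpin

theorem mgp_regular_general
    {σ : Type} [Fintype σ]
    (bar : σ → σ)
    (κ : ℕ)
    (L1 L2 : Language σ) (h1 : L1.IsRegular) (h2 : L2.IsRegular) :
    (MGP bar κ L1 L2).IsRegular := by
  obtain ⟨Q1, _, M1, rfl⟩ := h1
  obtain ⟨Q2, _, M2, rfl⟩ := h2
  have hMGP : MGP bar κ M1.accepts M2.accepts = {p | ∃ γ α, p = γ ++ α ∧ α.length = κ ∧
      Hairpin.SummaryAccepts bar M1 M2 (Hairpin.summary bar M1 M2 γ) α} := by
    ext p
    simp only [Hairpin.mem_MGP_iff, Hairpin.summaryAccepts_summary_iff]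
    rfl
  rw [hMGP]
  exact Language.isRegular_of_window (Hairpin.summary_concat bar M1 M2) κ _

theorem mgp_regular
    {σ : Type} [Fintype σ] (hσ : 2 ≤ Fintype.card σ)
    (bar : σ → σ) (hbar : ∀ a, bar (bar a) = a)
    (κ : ℕ) (hκ : 1 ≤ κ)
    (L1 L2 : Language σ) (h1 : L1.IsRegular) (h2 : L2.IsRegular) :
    (MGP bar κ L1 L2).IsRegular :=
  mgp_regular_general bar κ L1 L2 h1 h2
end

section
/- Let L₁ and L₂ be regular languages over Σ. Then the language Mid(L₁,L₂) consisting of all words β that occur as the middle factor of the canonical factorization of some word of H_κ(L₁,L₂) is regular. -/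
/-!
The conditions defining a canonical factorization with middle factor `β` only ask whether
words of the form `u ++ β ++ w` lie in `L1` or `L2`. For DFAs accepting `L1` and `L2` this
depends on `β` only through the pair of state transformations it induces; these range over a
finite set and compose under concatenation, so `Mid` has finitely many left quotients and is
regular by Myhill–Nerode.
-/

namespace List

variable {α : Type*} {u w z : List α}

theorem IsPrefix.prefix_or_eq_append (h : u <+: w ++ z) :
    u <+: w ∨ ∃ v, v <+: z ∧ v ≠ [] ∧ u = w ++ v := by
  rcases le_or_gt u.length w.length with hl | hl
  · exact .inl (prefix_of_prefix_length_le h (w.prefix_append z) hl)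
  · obtain ⟨v, rfl⟩ := prefix_of_prefix_length_le (w.prefix_append z) h hl.le
    refine .inr ⟨v, (prefix_append_right_inj w).mp h, ?_, rfl⟩
    rintro rfl
    simp at hl

theorem IsSuffix.suffix_or_eq_append (h : u <:+ w ++ z) :
    u <:+ z ∨ ∃ v, v <:+ w ∧ v ≠ [] ∧ u = v ++ z := by
  have h' : u.reverse <+: z.reverse ++ w.reverse := by
    simpa only [reverse_append] using h.reverse
  rcases h'.prefix_or_eq_append with h | ⟨v, hv, hv0, hu⟩
  · exact .inl (reverse_prefix.mp h)
  · refine .inr ⟨v.reverse, reverse_prefix.mp (by simpa using hv), by simpa using hv0, ?_⟩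
    rw [← reverse_reverse u, hu, reverse_append, reverse_reverse]

end List

namespace DFA

variable {α σ : Type*} (M : DFA α σ)

def transformation (x : List α) (s : σ) : σ := M.evalFrom s x

theorem transformation_append (x y : List α) :
    M.transformation (x ++ y) = M.transformation y ∘ M.transformation x :=
  funext fun s => M.evalFrom_of_append s x y

theorem mem_accepts_append_congr {x y : List α} (h : M.transformation x = M.transformation y)
    (u w : List α) : u ++ (x ++ w) ∈ M.accepts ↔ u ++ (y ++ w) ∈ M.accepts := by
  have eval_eq (v : List α) : M.eval v = M.transformation v M.start := rfl
  rw [mem_accepts, mem_accepts, eval_eq, eval_eq, transformation_append, transformation_append,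
    transformation_append, transformation_append, h]

end DFA

theorem Language.IsRegular.of_leftQuotient_factors {α F : Type*} [Finite F] {L : Language α}
    (f : List α → F) (h : ∀ x y, f x = f y → L.leftQuotient x = L.leftQuotient y) :
    L.IsRegular := by
  refine .of_finite_range_leftQuotient
    ((Set.finite_range fun c => L.leftQuotient (Function.invFun f c)).subset ?_)
  rintro _ ⟨x, rfl⟩
  exact ⟨f x, h _ _ (Function.invFun_eq ⟨x, rfl⟩)⟩

section Hairpin

variable {σ : Type} (bar : σ → σ) (κ : ℕ) (L1 L2 : Language σ)

/-- Every word is written as `left ++ (β ++ right)`, the shape in which `mem_Mid_congr` rewrites. -/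
theorem mem_Mid_iff (β : List σ) :
    β ∈ Mid bar κ L1 L2 ↔ ∃ γ α : List σ, α.length = κ ∧
      ((γ ++ α) ++ (β ++ ovr bar α) ∈ L1 ∨ α ++ (β ++ (ovr bar α ++ ovr bar γ)) ∈ L2) ∧
      (∀ v, v <+: ovr bar γ → v ≠ [] → (γ ++ α) ++ (β ++ (ovr bar α ++ v)) ∉ L1) ∧
      (∀ v, v <:+ γ → v ≠ [] → (v ++ α) ++ (β ++ (ovr bar α ++ ovr bar γ)) ∉ L2) := by
  simp only [List.append_assoc]
  constructor
  · rintro ⟨π, γ, α, -, rfl, hlen, hmem, hpre, hsuf⟩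
    refine ⟨γ, α, hlen, by simpa only [List.append_assoc] using hmem, ?_, ?_⟩
    · intro v hv hv0 hL
      have hle := (hpre _ (by simpa using hv) hL).length_le
      simp only [List.length_append] at hle
      exact hv0 (List.length_eq_zero_iff.mp (by omega))
    · intro v hv hv0 hL
      obtain ⟨t, rfl⟩ := hv
      have hle := (hsuf _ ⟨t, by simp⟩ hL).length_le
      simp only [List.length_append] at hle
      exact hv0 (List.length_eq_zero_iff.mp (by omega))
  · rintro ⟨γ, α, hlen, hmem, hmax1, hmax2⟩
    simp only [← List.append_assoc] at hmem hmax1 hmax2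
    refine ⟨_, γ, α, ⟨γ, α, β, rfl, hlen.ge, hmem⟩, rfl, hlen, hmem, ?_, ?_⟩
    · intro u hu hL
      rcases hu.prefix_or_eq_append with h | ⟨v, hv, hv0, rfl⟩
      · exact h
      · exact absurd hL (hmax1 v hv hv0)
    · intro u hu hL
      have hu : u <:+ γ ++ (α ++ β ++ ovr bar α ++ ovr bar γ) := by
        simpa only [List.append_assoc] using hu
      rcases hu.suffix_or_eq_append with h | ⟨v, hv, hv0, rfl⟩
      · exact h
      · exact absurd hL (by simpa only [List.append_assoc] using hmax2 v hv hv0)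

theorem mem_Mid_congr {β β' : List σ}
    (h1 : ∀ u w, u ++ (β ++ w) ∈ L1 ↔ u ++ (β' ++ w) ∈ L1)
    (h2 : ∀ u w, u ++ (β ++ w) ∈ L2 ↔ u ++ (β' ++ w) ∈ L2) :
    β ∈ Mid bar κ L1 L2 ↔ β' ∈ Mid bar κ L1 L2 := by
  simp only [mem_Mid_iff, h1, h2]

end Hairpin

theorem mid_regular_general
    {σ : Type} (bar : σ → σ) (κ : ℕ)
    (L1 L2 : Language σ) (h1 : L1.IsRegular) (h2 : L2.IsRegular) :
    (Mid bar κ L1 L2).IsRegular := by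
  obtain ⟨Q1, _, M1, rfl⟩ := h1
  obtain ⟨Q2, _, M2, rfl⟩ := h2
  refine .of_leftQuotient_factors (fun β => (M1.transformation β, M2.transformation β)) ?_
  rintro β β' hβ
  obtain ⟨hβ1, hβ2⟩ := Prod.mk.inj hβ
  ext z
  exact mem_Mid_congr bar κ _ _
    (M1.mem_accepts_append_congr (by simp only [DFA.transformation_append, hβ1]))
    (M2.mem_accepts_append_congr (by simp only [DFA.transformation_append, hβ2]))

theorem mid_regular
    {σ : Type} [Fintype σ] (hσ : 2 ≤ Fintype.card σ)
    (bar : σ → σ) (hbar : ∀ a, bar (bar a) = a)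
    (κ : ℕ) (hκ : 1 ≤ κ)
    (L1 L2 : Language σ) (h1 : L1.IsRegular) (h2 : L2.IsRegular) :
    (Mid bar κ L1 L2).IsRegular :=
  mid_regular_general bar κ L1 L2 h1 h2
end

section
/- Let K ⊆ Σ* be a regular language and let Pref(K) = { u ∈ Σ* : there exists v ∈ Σ* with u·v ∈ K } be its prefix closure. Then the growth indicators of K and Pref(K) coincide: λ_K = λ_{Pref(K)}. -/
/-!
Every prefix of a word of a regular language `K` extends to a word of `K` by at most `n` letters,
`n` the number of states of a DFA for `K`, since a shortest accepted continuation visits no state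
twice. Hence the words of `Pref(K)` of length `m` inject into the words of `K` of lengths
`m, …, m + n`, whose number is at most `c (1 + λ + ⋯ + λⁿ) λᵐ` if `|K ∩ Σᵏ| ≤ c λᵏ`. The
converse bound is immediate from `K ⊆ Pref(K)`.
-/

/-- The growth indicator of a language: the infimum of all `λ ≥ 0` such that
`|L ∩ Σ^m| ≤ c·λ^m` for some constant `c > 0` and all `m`. -/
noncomputable def growthInd {σ : Type} (L : Language σ) : ℝ :=
  sInf { l : ℝ | 0 ≤ l ∧ ∃ c : ℝ, 0 < c ∧
    ∀ m : ℕ, (Set.ncard { w : List σ | w ∈ L ∧ w.length = m } : ℝ) ≤ c * l ^ m }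

/-- The prefix closure of a language. -/
def prefClosure {σ : Type} (K : Language σ) : Language σ :=
  { u | ∃ v : List σ, u ++ v ∈ K }

open Finset

namespace DFA

variable {α σ : Type} [Fintype σ] (M : DFA α σ)

theorem exists_mem_acceptsFrom_length_le {s : σ} {v : List α} (hv : v ∈ M.acceptsFrom s) :
    ∃ w ∈ M.acceptsFrom s, w.length ≤ Fintype.card σ := by
  induction h : v.length using Nat.strong_induction_on generalizing v with
  | _ k ih =>
    by_cases hshort : v.length ≤ Fintype.card σ
    · exact ⟨v, hv, hshort⟩
    obtain ⟨q, a, b, c, rfl, -, hb, ha, -, hc⟩ :=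
      M.evalFrom_split (le_of_not_ge hshort) rfl
    refine ih (a ++ c).length ?_ ?_ rfl
    · have := List.length_pos_iff.mpr hb
      simp only [List.length_append] at h ⊢
      omega
    · rw [mem_acceptsFrom, evalFrom_of_append, ha, hc]
      exact hv

end DFA

theorem Language.IsRegular.exists_append_mem_length_le {α : Type} {K : Language α}
    (hK : K.IsRegular) :
    ∃ n : ℕ, ∀ u v : List α, u ++ v ∈ K → ∃ w : List α, w.length ≤ n ∧ u ++ w ∈ K := by
  obtain ⟨σ, _, M, rfl⟩ := hK
  refine ⟨Fintype.card σ, fun u v huv => ?_⟩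
  have hv : v ∈ M.acceptsFrom (M.eval u) := by
    rwa [DFA.mem_acceptsFrom, DFA.eval, ← DFA.evalFrom_of_append]
  obtain ⟨w, hw, hlen⟩ := M.exists_mem_acceptsFrom_length_le hv
  refine ⟨w, hlen, ?_⟩
  rwa [DFA.mem_accepts, DFA.eval, DFA.evalFrom_of_append]

namespace Language

variable {σ : Type}

def slice (L : Language σ) (m : ℕ) : Set (List σ) :=
  { w | w ∈ L ∧ w.length = m }

def growthBounds (L : Language σ) : Set ℝ :=
  { l | 0 ≤ l ∧ ∃ c : ℝ, 0 < c ∧ ∀ m : ℕ, ((L.slice m).ncard : ℝ) ≤ c * l ^ m }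

theorem growthInd_eq_sInf_growthBounds (L : Language σ) :
    growthInd L = sInf L.growthBounds :=
  rfl

variable [Finite σ] {L L' : Language σ} {n : ℕ}

theorem finite_slice (L : Language σ) (m : ℕ) : (L.slice m).Finite :=
  (List.finite_length_eq σ m).subset fun _ hw => hw.2

theorem ncard_slice_le_sum_of_extend (h : ∀ u ∈ L, ∃ w : List σ, w.length ≤ n ∧ u ++ w ∈ L')
    (m : ℕ) : (L.slice m).ncard ≤ ∑ j ∈ range (n + 1), (L'.slice (m + j)).ncard := by
  choose! ext hlen hmem using h
  have hmaps : ∀ u ∈ L.slice m, u ++ ext u ∈ ⋃ j ∈ range (n + 1), L'.slice (m + j) := by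
    rintro u ⟨hu, rfl⟩
    simp only [Set.mem_iUnion, mem_range]
    exact ⟨(ext u).length, Nat.lt_succ_of_le (hlen u hu), hmem u hu, List.length_append⟩
  have hinj : Set.InjOn (fun u => u ++ ext u) (L.slice m) :=
    fun u hu u' hu' heq => (List.append_inj heq (hu.2.trans hu'.2.symm)).1
  calc (L.slice m).ncard ≤ (⋃ j ∈ range (n + 1), L'.slice (m + j)).ncard :=
        Set.ncard_le_ncard_of_injOn _ hmaps hinj
          (Set.Finite.biUnion (finite_toSet _) fun j _ => L'.finite_slice (m + j))
    _ ≤ ∑ j ∈ range (n + 1), (L'.slice (m + j)).ncard := set_ncard_biUnion_le _ _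

theorem growthBounds_subset_of_extend
    (h : ∀ u ∈ L, ∃ w : List σ, w.length ≤ n ∧ u ++ w ∈ L') :
    L'.growthBounds ⊆ L.growthBounds := by
  rintro l ⟨hl, c, hc, hbound⟩
  have hgeom : 0 < ∑ j ∈ range (n + 1), l ^ j := by
    rw [sum_range_succ']
    positivity
  refine ⟨hl, c * ∑ j ∈ range (n + 1), l ^ j, mul_pos hc hgeom, fun m => ?_⟩
  calc ((L.slice m).ncard : ℝ) ≤ ∑ j ∈ range (n + 1), ((L'.slice (m + j)).ncard : ℝ) := by
        exact_mod_cast ncard_slice_le_sum_of_extend h m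
    _ ≤ ∑ j ∈ range (n + 1), c * l ^ (m + j) := sum_le_sum fun j _ => hbound (m + j)
    _ = (c * ∑ j ∈ range (n + 1), l ^ j) * l ^ m := by
        rw [mul_assoc, sum_mul, mul_sum]
        simp only [pow_add, mul_comm]

end Language

theorem growth_indicator_prefix_closure_general
    {σ : Type} [Fintype σ]
    (K : Language σ) (hK : K.IsRegular) :
    growthInd K = growthInd (prefClosure K) := by
  obtain ⟨n, hn⟩ := hK.exists_append_mem_length_le
  have hK_pref : ∀ u ∈ K, ∃ w : List σ, w.length ≤ 0 ∧ u ++ w ∈ prefClosure K :=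
    fun u hu => ⟨[], le_rfl, [], by simpa using hu⟩
  have hpref_K : ∀ u ∈ prefClosure K, ∃ w : List σ, w.length ≤ n ∧ u ++ w ∈ K :=
    fun u ⟨v, hv⟩ => hn u v hv
  rw [Language.growthInd_eq_sInf_growthBounds, Language.growthInd_eq_sInf_growthBounds,
    (Language.growthBounds_subset_of_extend hpref_K).antisymm
      (Language.growthBounds_subset_of_extend hK_pref)]

theorem growth_indicator_prefix_closure
    {σ : Type} [Fintype σ] (hσ : 2 ≤ Fintype.card σ)
    (K : Language σ) (hK : K.IsRegular) :
    growthInd K = growthInd (prefClosure K) :=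
  growth_indicator_prefix_closure_general K hK
end

section
/- Let B, R ⊆ Σ* be nonempty languages and let B^R = { v·β·overline(v) : v ∈ R, β ∈ B }. Then the growth indicator of B^R equals max(λ_B, √(λ_R)). -/
/-- The conjugation language `B^R = { v·β·overline(v) : v ∈ R, β ∈ B }`. -/
def conjLang {σ : Type} (bar : σ → σ) (B R : Language σ) : Language σ :=
  { x | ∃ v ∈ R, ∃ β ∈ B, x = v ++ β ++ ovr bar v }


/-!
Fixing `v₀ ∈ R`, the map `β ↦ v₀ β v̄₀` injects the words of `B` of length `m` into those
of `B^R` of length `m + 2|v₀|`; fixing `β₀ ∈ B`, the map `v ↦ v β₀ v̄` injects the words of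
`R` of length `k` into those of `B^R` of length `2k + |β₀|`. A fixed shift of lengths only
changes the constant and doubling lengths squares the rate, so `λ_B ≤ λ_{B^R}` and
`λ_R ≤ λ_{B^R}²`.

Conversely a word of `B^R` of length `m` comes from a pair `(v, β) ∈ R × B` with
`2|v| + |β| = m`, so for `λ` above `max(λ_B, √λ_R)` there are at most
`∑_{2k ≤ m} c_R λ^{2k} c_B λ^{m-2k} ≤ c (m+1) λ^m` of them, and a polynomial factor does
not change the growth indicator.
-/

open Set Filter Topology Finset

lemma exists_succ_mul_pow_le {l t : ℝ} (hl : 0 ≤ l) (hlt : l < t) :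
    ∃ M : ℝ, ∀ m : ℕ, (m + 1) * l ^ m ≤ M * t ^ m := by
  have ht : 0 < t := hl.trans_lt hlt
  have hr : l / t < 1 := (div_lt_one ht).2 hlt
  obtain ⟨M, hM⟩ := (tendsto_self_mul_const_pow_of_lt_one (by positivity) hr).bddAbove_range
  refine ⟨M + 1, fun m => ?_⟩
  have hmul : (m : ℝ) * (l / t) ^ m ≤ M := hM (Set.mem_range_self m)
  have hpow : (l / t) ^ m ≤ 1 := pow_le_one₀ (by positivity) hr.le
  calc (m + 1) * l ^ m = ((m : ℝ) * (l / t) ^ m + (l / t) ^ m) * t ^ m := by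
        rw [div_pow]; field_simp
    _ ≤ (M + 1) * t ^ m := by gcongr

namespace Language

variable {σ : Type}

noncomputable def census (L : Language σ) (m : ℕ) : ℕ :=
  {w : List σ | w ∈ L ∧ w.length = m}.ncard

lemma finite_setOf_mem_length_eq [Finite σ] (L : Language σ) (m : ℕ) :
    {w : List σ | w ∈ L ∧ w.length = m}.Finite :=
  (List.finite_length_eq σ m).subset fun _ hw => hw.2

lemma census_le_card_pow [Fintype σ] (L : Language σ) (m : ℕ) :
    L.census m ≤ Fintype.card σ ^ m := by
  have hcard : {w : List σ | w.length = m}.ncard = Fintype.card σ ^ m := by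
    rw [← Nat.card_coe_set_eq, ← card_vector, ← Nat.card_eq_fintype_card]
    rfl
  exact hcard ▸ Set.ncard_le_ncard (fun _ hw => hw.2) (List.finite_length_eq σ m)

lemma census_le_census_of_injOn [Finite σ] {L K : Language σ} {m n : ℕ}
    (f : List σ → List σ)
    (hf : ∀ w ∈ L, w.length = m → f w ∈ K ∧ (f w).length = n)
    (hinj : InjOn f {w | w ∈ L ∧ w.length = m}) :
    L.census m ≤ K.census n :=
  Set.ncard_le_ncard_of_injOn f (fun w hw => hf w hw.1 hw.2) hinj
    (finite_setOf_mem_length_eq K n)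

def IsGrowthBound (L : Language σ) (l : ℝ) : Prop :=
  0 ≤ l ∧ ∃ c : ℝ, 0 < c ∧ ∀ m : ℕ, (L.census m : ℝ) ≤ c * l ^ m

lemma IsGrowthBound.mono {L : Language σ} {l l' : ℝ} (h : L.IsGrowthBound l) (hl : l ≤ l') :
    L.IsGrowthBound l' := by
  obtain ⟨hl0, c, hc, hbound⟩ := h
  exact ⟨hl0.trans hl, c, hc, fun m => (hbound m).trans (by gcongr)⟩

lemma isGrowthBound_card [Fintype σ] (L : Language σ) :
    L.IsGrowthBound (Fintype.card σ) :=
  ⟨Nat.cast_nonneg _, 1, one_pos, fun m => by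
    rw [one_mul]; exact_mod_cast L.census_le_card_pow m⟩

lemma growthInd_nonneg (L : Language σ) : 0 ≤ growthInd L :=
  Real.sInf_nonneg fun _ hl => hl.1

lemma growthInd_le {L : Language σ} {l : ℝ} (h : L.IsGrowthBound l) : growthInd L ≤ l :=
  csInf_le ⟨0, fun _ hl => hl.1⟩ h

lemma isGrowthBound_of_growthInd_lt [Fintype σ] {L : Language σ} {l : ℝ}
    (h : growthInd L < l) : L.IsGrowthBound l := by
  obtain ⟨l', hl', hl'l⟩ := 
    exists_lt_of_csInf_lt (s := {l | L.IsGrowthBound l}) ⟨_, L.isGrowthBound_card⟩ h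
  exact hl'.mono hl'l.le

lemma growthInd_le_of_census_le_mul_succ_pow {L : Language σ} {l c : ℝ} (hl : 0 ≤ l)
    (hc : 0 < c) (h : ∀ m : ℕ, (L.census m : ℝ) ≤ c * (m + 1) * l ^ m) : growthInd L ≤ l := by
  refine le_of_forall_gt_imp_ge_of_dense fun t ht => growthInd_le ?_
  obtain ⟨M, hM⟩ := exists_succ_mul_pow_le hl ht
  have hM0 : 0 < M := zero_lt_one.trans_le (by simpa using hM 0)
  refine ⟨hl.trans ht.le, c * M, mul_pos hc hM0, fun m => ?_⟩
  calc (L.census m : ℝ) ≤ c * ((m + 1) * l ^ m) := by rw [← mul_assoc]; exact h m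
    _ ≤ c * (M * t ^ m) := mul_le_mul_of_nonneg_left (hM m) hc.le
    _ = c * M * t ^ m := by ring

lemma growthInd_le_pow_of_census_le [Fintype σ] {L K : Language σ} (d s : ℕ)
    (h : ∀ m, L.census m ≤ K.census (d * m + s)) : growthInd L ≤ growthInd K ^ d := by
  have hbound : ∀ l, growthInd K < l → growthInd L ≤ l ^ d := by
    intro l hl
    have hl0 : 0 < l := K.growthInd_nonneg.trans_lt hl
    obtain ⟨-, c, hc, hK⟩ := isGrowthBound_of_growthInd_lt hl
    refine growthInd_le ⟨by positivity, c * l ^ s, by positivity, fun m => ?_⟩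
    calc (L.census m : ℝ) ≤ K.census (d * m + s) := by exact_mod_cast h m
      _ ≤ c * l ^ (d * m + s) := hK _
      _ = c * l ^ s * (l ^ d) ^ m := by rw [pow_add, pow_mul]; ring
  have hcont : Tendsto (· ^ d) (𝓝[>] growthInd K) (𝓝 (growthInd K ^ d)) :=
    (continuous_pow d).continuousAt.continuousWithinAt
  exact ge_of_tendsto hcont (eventually_nhdsWithin_of_forall hbound)

end Language

open Language

variable {σ : Type}

lemma length_ovr (bar : σ → σ) (w : List σ) : (ovr bar w).length = w.length := by
  simp [ovr]

lemma census_conjLang_le [Finite σ] (bar : σ → σ) (B R : Language σ) (m : ℕ) :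
    (conjLang bar B R).census m ≤
      ∑ k ∈ range (m / 2 + 1), R.census k * B.census (m - 2 * k) := by
  let g : List σ × List σ → List σ := fun p => p.1 ++ p.2 ++ ovr bar p.1
  let pairs : ℕ → Set (List σ × List σ) := fun k =>
    {v | v ∈ R ∧ v.length = k} ×ˢ {β | β ∈ B ∧ β.length = m - 2 * k}
  have hpairs : ∀ k, (pairs k).Finite := fun k =>
    (finite_setOf_mem_length_eq R k).prod (finite_setOf_mem_length_eq B _)
  have hcover : {w | w ∈ conjLang bar B R ∧ w.length = m} ⊆
      ⋃ k ∈ range (m / 2 + 1), g '' pairs k := by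
    rintro _ ⟨⟨v, hv, β, hβ, rfl⟩, hlen⟩
    simp only [List.length_append, length_ovr] at hlen
    refine Set.mem_biUnion (x := v.length) (by simp; omega)
      ⟨(v, β), ⟨⟨hv, rfl⟩, hβ, ?_⟩, rfl⟩
    show β.length = m - 2 * v.length
    omega
  calc (conjLang bar B R).census m ≤ (⋃ k ∈ range (m / 2 + 1), g '' pairs k).ncard :=
        Set.ncard_le_ncard hcover (finite_toSet _ |>.biUnion fun k _ => (hpairs k).image g)
    _ ≤ ∑ k ∈ range (m / 2 + 1), (g '' pairs k).ncard := set_ncard_biUnion_le _ _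
    _ ≤ ∑ k ∈ range (m / 2 + 1), (pairs k).ncard :=
        sum_le_sum fun k _ => Set.ncard_image_le (hpairs k)
    _ = ∑ k ∈ range (m / 2 + 1), R.census k * B.census (m - 2 * k) := by
        simp only [pairs, Set.ncard_prod, census]

lemma growthInd_conjLang_le [Fintype σ] (bar : σ → σ) (B R : Language σ) :
    growthInd (conjLang bar B R) ≤ max (growthInd B) (√(growthInd R)) := by
  refine le_of_forall_gt_imp_ge_of_dense fun l hl => ?_
  have hl0 : 0 < l := (le_max_of_le_right (Real.sqrt_nonneg _)).trans_lt hl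
  obtain ⟨-, cB, hcB, hB⟩ := isGrowthBound_of_growthInd_lt ((le_max_left _ _).trans_lt hl)
  obtain ⟨-, cR, hcR, hR⟩ :=
    isGrowthBound_of_growthInd_lt ((Real.sqrt_lt' hl0).1 ((le_max_right _ _).trans_lt hl))
  refine growthInd_le_of_census_le_mul_succ_pow hl0.le (mul_pos hcR hcB) fun m => ?_
  have hterm : ∀ k ∈ range (m / 2 + 1),
      (R.census k * B.census (m - 2 * k) : ℝ) ≤ cR * cB * l ^ m := by
    intro k hk
    have hkm : 2 * k + (m - 2 * k) = m := by simp at hk; omega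
    calc (R.census k * B.census (m - 2 * k) : ℝ) ≤ cR * (l ^ 2) ^ k * (cB * l ^ (m - 2 * k)) :=
          mul_le_mul (hR k) (hB _) (by positivity) (by positivity)
      _ = cR * cB * (l ^ (2 * k) * l ^ (m - 2 * k)) := by rw [pow_mul]; ring
      _ = cR * cB * l ^ m := by rw [← pow_add, hkm]
  calc ((conjLang bar B R).census m : ℝ)
      ≤ ∑ k ∈ range (m / 2 + 1), (R.census k * B.census (m - 2 * k) : ℝ) := by
        exact_mod_cast census_conjLang_le bar B R m
    _ ≤ (m / 2 + 1 : ℕ) * (cR * cB * l ^ m) := by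
        simpa using sum_le_card_nsmul _ _ _ hterm
    _ ≤ (m + 1) * (cR * cB * l ^ m) := by
        gcongr; exact_mod_cast Nat.succ_le_succ (Nat.div_le_self m 2)
    _ = cR * cB * (m + 1) * l ^ m := by ring

lemma growthInd_le_growthInd_conjLang [Fintype σ] (bar : σ → σ) (B : Language σ)
    {R : Language σ} (hR : (R : Set (List σ)).Nonempty) :
    growthInd B ≤ growthInd (conjLang bar B R) := by
  obtain ⟨v, hv⟩ := hR
  simpa using growthInd_le_pow_of_census_le (K := conjLang bar B R) 1 (2 * v.length) fun m =>
    census_le_census_of_injOn (fun β => v ++ β ++ ovr bar v)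
      (fun β hβ hlen => ⟨⟨v, hv, β, hβ, rfl⟩, by simp [length_ovr, hlen]; omega⟩)
      fun _ _ _ _ h => List.append_cancel_left (List.append_cancel_right h)

lemma sqrt_growthInd_le_growthInd_conjLang [Fintype σ] (bar : σ → σ) {B : Language σ}
    (R : Language σ) (hB : (B : Set (List σ)).Nonempty) :
    √(growthInd R) ≤ growthInd (conjLang bar B R) := by
  obtain ⟨β, hβ⟩ := hB
  refine (Real.sqrt_le_left (growthInd_nonneg _)).2 <| growthInd_le_pow_of_census_le 2 β.length
    fun k => census_le_census_of_injOn (fun v => v ++ β ++ ovr bar v)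
      (fun v hv hlen => ⟨⟨v, hv, β, hβ, rfl⟩, by simp [length_ovr, hlen]; omega⟩) ?_
  rintro v₁ ⟨-, h₁⟩ v₂ ⟨-, h₂⟩ h
  simp only [List.append_assoc] at h
  exact (List.append_inj h (h₁.trans h₂.symm)).1

theorem growth_indicator_conjugation_general
    {σ : Type} [Fintype σ]
    (bar : σ → σ)
    (B R : Language σ) (hB : (B : Set (List σ)).Nonempty)
    (hR : (R : Set (List σ)).Nonempty) :
    growthInd (conjLang bar B R) = max (growthInd B) (Real.sqrt (growthInd R)) :=
  le_antisymm (growthInd_conjLang_le bar B R)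
    (max_le (growthInd_le_growthInd_conjLang bar B hR)
      (sqrt_growthInd_le_growthInd_conjLang bar R hB))

theorem growth_indicator_conjugation
    {σ : Type} [Fintype σ] (hσ : 2 ≤ Fintype.card σ)
    (bar : σ → σ) (hbar : ∀ a, bar (bar a) = a)
    (B R : Language σ) (hB : (B : Set (List σ)).Nonempty)
    (hR : (R : Set (List σ)).Nonempty) :
    growthInd (conjLang bar B R) = max (growthInd B) (Real.sqrt (growthInd R)) :=
  growth_indicator_conjugation_general bar B R hB hR
end

section
/- Let L₁ and L₂ be regular languages over Σ. Then the growth indicator of the hairpin completion satisfies λ_{H_κ(L₁,L₂)} = max(λ_{Mid(L₁,L₂)}, √(λ_{MGP(L₁,L₂)})). -/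
/-!
Every word of the hairpin completion has a unique canonical factorization `γ α β ᾱ γ̄`, and it
is determined by the pair `(γ α, β) ∈ MGP × Mid`. Hence the number of its words of length `m` is
at most `∑ᵢ |MGPᵢ| · |Mid_{m - 2i}|`, and such a convolution grows at most like
`max (λ_Mid, √λ_MGP)`.

Conversely, when `L₁` and `L₂` are regular, the outer part `γ` (resp. the middle `β`) of a
canonical factorization can be cut between two positions with the same automaton profile
without destroying canonicity. Pumping down this way sends `Mid` injectively into words of the
hairpin completion of length `n + O(1)` and `MGP` into words of length `2n + O(1)`, which gives
`λ_Mid ≤ λ_H` and `λ_MGP ≤ λ_H²`.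
-/

namespace HairpinCompletion

open Finset

variable {σ : Type}

section Lists
variable {α : Type*}

theorem prefix_append_cases {v x y : List α} (h : v <+: x ++ y) :
    v <+: x ∨ ∃ w, w <+: y ∧ v = x ++ w := by
  obtain ⟨r, hr⟩ := h
  rcases List.append_eq_append_iff.1 hr with ⟨a, rfl, -⟩ | ⟨c, rfl, rfl⟩
  · exact Or.inl (List.prefix_append _ _)
  · exact Or.inr ⟨c, List.prefix_append _ _, rfl⟩

theorem suffix_append_cases {v x y : List α} (h : v <:+ x ++ y) :
    v <:+ y ∨ ∃ w, w <:+ x ∧ v = w ++ y := by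
  obtain ⟨r, hr⟩ := h
  rcases List.append_eq_append_iff.1 hr with ⟨a, rfl, rfl⟩ | ⟨c, -, rfl⟩
  · exact Or.inr ⟨a, List.suffix_append _ _, rfl⟩
  · exact Or.inl (List.suffix_append _ _)

theorem forall_prefix_mem_imp_prefix_iff {x y : List α} {L : Language α} :
    (∀ u, u <+: x ++ y → u ∈ L → u <+: x) ↔ ∀ v, v <+: y → x ++ v ∈ L → v = [] := by
  constructor
  · intro h v hv hL
    simpa using (h _ ((List.prefix_append_right_inj x).2 hv) hL).length_le
  · intro h u hu hL
    rcases prefix_append_cases hu with hx | ⟨v, hv, rfl⟩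
    · exact hx
    · rw [h v hv hL, List.append_nil]

theorem forall_suffix_mem_imp_suffix_iff {x y : List α} {L : Language α} :
    (∀ u, u <:+ x ++ y → u ∈ L → u <:+ y) ↔ ∀ v, v <:+ x → v ++ y ∈ L → v = [] := by
  constructor
  · intro h v hv hL
    simpa using (h _ (List.suffix_append_self_iff.2 hv) hL).length_le
  · intro h u hu hL
    rcases suffix_append_cases hu with hy | ⟨v, hv, rfl⟩
    · exact hy
    · rw [h v hv hL, List.nil_append]

end Lists

section Words
variable (bar : σ → σ)

@[simp] theorem ovr_append (x y : List σ) : ovr bar (x ++ y) = ovr bar y ++ ovr bar x := by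
  simp [ovr]

@[simp] theorem ovr_eq_nil_iff {x : List σ} : ovr bar x = [] ↔ x = [] := by simp [ovr]

@[simp] theorem length_ovr (x : List σ) : (ovr bar x).length = x.length := by simp [ovr]

theorem exists_eq_append_of_prefix_ovr {v x : List σ} (h : v <+: ovr bar x) :
    ∃ x₁ x₂, x = x₁ ++ x₂ ∧ v = ovr bar x₂ := by
  refine ⟨x.take (x.length - v.length), x.drop (x.length - v.length),
    (List.take_append_drop _ _).symm, ?_⟩
  have hlen : v.length ≤ x.length := by simpa using h.length_le
  rw [List.prefix_iff_eq_take.1 h, ovr, List.take_reverse, ← List.map_drop]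
  simp [ovr, Nat.sub_sub_self hlen]

theorem exists_hairpin_eq_of_le_length {κ : ℕ} {α : List σ} (β : List σ) (h : κ ≤ α.length) :
    ∃ α' β', α'.length = κ ∧
      ∀ x y, x ++ α ++ β ++ ovr bar α ++ y = x ++ α' ++ β' ++ ovr bar α' ++ y := by
  obtain ⟨α₁, α₂, rfl, hα₁⟩ : ∃ α₁ α₂, α = α₁ ++ α₂ ∧ α₁.length = κ :=
    ⟨α.take κ, α.drop κ, (List.take_append_drop _ _).symm, by simpa using h⟩
  exact ⟨α₁, α₂ ++ β ++ ovr bar α₂, hα₁, by simp⟩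

theorem exists_regroup_of_prefix_ovr {κ : ℕ} {γ α β v : List σ} (hα : α.length = κ)
    (hv : v <+: ovr bar γ) (hne : v ≠ []) :
    ∃ γ' α' β', γ'.length < γ.length ∧ α'.length = κ ∧
      γ ++ α ++ β ++ ovr bar α ++ ovr bar γ = γ' ++ α' ++ β' ++ ovr bar α' ++ ovr bar γ' ∧
      γ ++ α ++ β ++ ovr bar α ++ v = γ' ++ α' ++ β' ++ ovr bar α' := by
  obtain ⟨g, x, rfl, rfl⟩ := exists_eq_append_of_prefix_ovr bar hv
  obtain ⟨α', β', hα', he⟩ :=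
    exists_hairpin_eq_of_le_length bar (κ := κ) β (α := x ++ α) (by simp [hα])
  refine ⟨g, α', β', by simpa [List.length_pos_iff] using hne, hα',
    by simpa using he g (ovr bar g), ?_⟩
  simpa using he g []

theorem exists_regroup_of_suffix {κ : ℕ} {γ α β v : List σ} (hα : α.length = κ)
    (hv : v <:+ γ) (hne : v ≠ []) :
    ∃ γ' α' β', γ'.length < γ.length ∧ α'.length = κ ∧
      γ ++ α ++ β ++ ovr bar α ++ ovr bar γ = γ' ++ α' ++ β' ++ ovr bar α' ++ ovr bar γ' ∧
      v ++ (α ++ β ++ ovr bar α ++ ovr bar γ) = α' ++ β' ++ ovr bar α' ++ ovr bar γ' := by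
  obtain ⟨g, rfl⟩ := hv
  obtain ⟨α', β', hα', he⟩ :=
    exists_hairpin_eq_of_le_length bar (κ := κ) β (α := v ++ α) (by simp [hα])
  refine ⟨g, α', β', by simpa [List.length_pos_iff] using hne, hα',
    by simpa using he g (ovr bar g), ?_⟩
  simpa using he [] (ovr bar g)

end Words

section Canonical
variable (bar : σ → σ) (κ : ℕ) (L1 L2 : Language σ)

def IsCanonical (γ α β : List σ) : Prop :=
  α.length = κ ∧
  (γ ++ α ++ β ++ ovr bar α ∈ L1 ∨ α ++ β ++ ovr bar α ++ ovr bar γ ∈ L2) ∧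
  (∀ v, v <+: ovr bar γ → γ ++ α ++ β ++ ovr bar α ++ v ∈ L1 → v = []) ∧
  (∀ v, v <:+ γ → v ++ (α ++ β ++ ovr bar α ++ ovr bar γ) ∈ L2 → v = [])

variable {bar κ L1 L2}

theorem canonFact_iff {π γ α β : List σ} :
    CanonFact bar κ L1 L2 π γ α β ↔
      π = γ ++ α ++ β ++ ovr bar α ++ ovr bar γ ∧ IsCanonical bar κ L1 L2 γ α β := by
  refine and_congr_right fun hπ => ?_
  subst hπ
  rw [forall_prefix_mem_imp_prefix_iff,
    show γ ++ α ++ β ++ ovr bar α ++ ovr bar γ = γ ++ (α ++ β ++ ovr bar α ++ ovr bar γ) by simp,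
    forall_suffix_mem_imp_suffix_iff]
  rfl

theorem canonFact_mem_hairpinCompletion {π γ α β : List σ} (h : CanonFact bar κ L1 L2 π γ α β) :
    π ∈ hairpinCompletion bar κ L1 L2 :=
  ⟨γ, α, β, h.1, h.2.1.ge, h.2.2.1⟩

theorem canonFact_length_eq {π γ α β : List σ} (h : CanonFact bar κ L1 L2 π γ α β) :
    π.length = 2 * (γ.length + κ) + β.length := by
  rw [h.1]
  simp [h.2.1]
  omega

theorem exists_isCanonical {π : List σ} (hπ : π ∈ hairpinCompletion bar κ L1 L2) :
    ∃ γ α β, π = γ ++ α ++ β ++ ovr bar α ++ ovr bar γ ∧ IsCanonical bar κ L1 L2 γ α β := by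
  classical
  have hex : ∃ n, ∃ γ α β : List σ, γ.length = n ∧
      π = γ ++ α ++ β ++ ovr bar α ++ ovr bar γ ∧ α.length = κ ∧
      (γ ++ α ++ β ++ ovr bar α ∈ L1 ∨ α ++ β ++ ovr bar α ++ ovr bar γ ∈ L2) := by
    obtain ⟨γ, α₀, β₀, rfl, hα₀, hmem⟩ := hπ
    obtain ⟨α, β, hα, he⟩ := exists_hairpin_eq_of_le_length bar β₀ hα₀
    refine ⟨_, γ, α, β, rfl, he γ _, hα, ?_⟩
    have h₁ := he γ []
    have h₂ := he [] (ovr bar γ)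
    simp only [List.append_nil, List.nil_append] at h₁ h₂
    rwa [h₁, h₂] at hmem
  -- a factorization with `γ` of minimal length is canonical
  obtain ⟨γ, α, β, hγ, rfl, hα, hmem⟩ := Nat.find_spec hex
  refine ⟨γ, α, β, rfl, hα, hmem, fun v hv hv₁ => ?_, fun v hv hv₂ => ?_⟩
  · by_contra hne
    obtain ⟨γ', α', β', hlt, hα', he, hv'⟩ := exists_regroup_of_prefix_ovr bar hα hv hne
    exact Nat.find_min hex (hγ ▸ hlt) ⟨γ', α', β', rfl, he, hα', Or.inl (hv' ▸ hv₁)⟩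
  · by_contra hne
    obtain ⟨γ', α', β', hlt, hα', he, hv'⟩ := exists_regroup_of_suffix bar hα hv hne
    exact Nat.find_min hex (hγ ▸ hlt) ⟨γ', α', β', rfl, he, hα', Or.inr (hv' ▸ hv₂)⟩

theorem canonFact_length_le {π γ α β γ' α' β' : List σ} (h : CanonFact bar κ L1 L2 π γ α β)
    (h' : CanonFact bar κ L1 L2 π γ' α' β') : γ.length ≤ γ'.length := by
  obtain ⟨rfl, hα, -, hpre, hsuf⟩ := h
  obtain ⟨he, hα', hmem', -, -⟩ := h'
  have hlen := congrArg List.length he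
  rcases hmem' with h₁ | h₂
  · have := (hpre _ ⟨ovr bar γ', he.symm⟩ h₁).length_le
    simp only [List.length_append, length_ovr] at this hlen
    omega
  · have := (hsuf _ ⟨γ', by rw [he]; simp⟩ h₂).length_le
    simp only [List.length_append, length_ovr] at this hlen
    omega

theorem canonFact_unique {π γ α β γ' α' β' : List σ} (h : CanonFact bar κ L1 L2 π γ α β)
    (h' : CanonFact bar κ L1 L2 π γ' α' β') : γ = γ' ∧ α = α' ∧ β = β' := by
  have hγ := le_antisymm (canonFact_length_le h h') (canonFact_length_le h' h)
  obtain ⟨he, hα, -⟩ := h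
  obtain ⟨he', hα', -⟩ := h'
  have e : γ ++ (α ++ (β ++ (ovr bar α ++ ovr bar γ))) =
      γ' ++ (α' ++ (β' ++ (ovr bar α' ++ ovr bar γ'))) := by
    simpa using he.symm.trans he'
  obtain ⟨rfl, e⟩ := List.append_inj e hγ
  obtain ⟨rfl, e⟩ := List.append_inj e (hα.trans hα'.symm)
  exact ⟨rfl, rfl, List.append_cancel_right e⟩

theorem exists_canonFact {π : List σ} (hπ : π ∈ hairpinCompletion bar κ L1 L2) :
    ∃ γ α β, CanonFact bar κ L1 L2 π γ α β := by
  simpa only [canonFact_iff] using exists_isCanonical hπ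

end Canonical

section Pumping

theorem exists_cut_of_card_le {Q : Type*} [Fintype Q] (prof : List σ → List σ → Q)
    {w : List σ} (hw : Fintype.card Q ≤ w.length) :
    ∃ x y z, w = x ++ y ++ z ∧ y ≠ [] ∧ prof x (y ++ z) = prof (x ++ y) z := by
  obtain ⟨a, b, hab, heq⟩ := Fintype.exists_ne_map_eq_of_card_lt
    (fun t : Fin (w.length + 1) => prof (w.take t) (w.drop t)) (by simpa [Nat.lt_succ_iff])
  wlog hlt : a < b generalizing a b
  · exact this b a hab.symm heq.symm (hab.lt_or_gt.resolve_left hlt)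
  have hb : (b : ℕ) ≤ w.length := Nat.lt_succ_iff.1 b.2
  have hxy : w.take a ++ (w.drop a).take (b - a) = w.take b := by
    rw [← List.take_add, Nat.add_sub_cancel' hlt.le]
  have hyz : (w.drop a).take (b - a) ++ w.drop b = w.drop a := by
    rw [← Nat.add_sub_cancel' hlt.le, ← List.drop_drop, Nat.add_sub_cancel' hlt.le,
      List.take_append_drop]
  refine ⟨w.take a, (w.drop a).take (b - a), w.drop b, ?_, ?_, ?_⟩
  · rw [hxy, List.take_append_drop]
  · rw [← List.length_pos_iff, List.length_take, List.length_drop]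
    omega
  · rw [hxy, hyz]
    exact heq

theorem exists_length_lt_of_forall_cut {P : List σ → Prop} {Q : Type*} [Fintype Q]
    (prof : List σ → List σ → Q)
    (hcut : ∀ x y z, P (x ++ y ++ z) → prof x (y ++ z) = prof (x ++ y) z → P (x ++ z))
    {w : List σ} (hw : P w) : ∃ w', P w' ∧ w'.length < Fintype.card Q := by
  induction hn : w.length using Nat.strong_induction_on generalizing w with
  | _ n ih =>
    by_cases hlt : w.length < Fintype.card Q
    · exact ⟨w, hw, hlt⟩
    obtain ⟨x, y, z, rfl, hy, hprof⟩ := exists_cut_of_card_le prof (not_lt.1 hlt)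
    exact ih _ (by simp [← hn, List.length_pos_iff.2 hy]) (hcut x y z hw hprof) rfl

end Pumping

section Automata
variable {bar : σ → σ} {κ : ℕ} {Q₁ Q₂ : Type*} {M₁ : DFA σ Q₁} {M₂ : DFA σ Q₂}

theorem eval_append {Q : Type*} (M : DFA σ Q) (u w : List σ) :
    M.eval (u ++ w) = M.evalFrom (M.eval u) w :=
  DFA.evalFrom_of_append _ _ _ _

theorem evalFrom_append_cut {Q : Type*} {M : DFA σ Q} {x y : List σ}
    (h : (M.evalFrom · x) = (M.evalFrom · (x ++ y))) (z : List σ) (q : Q) :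
    M.evalFrom q (x ++ z) = M.evalFrom q (x ++ y ++ z) := by
  rw [DFA.evalFrom_of_append, DFA.evalFrom_of_append _ _ (x ++ y), congrFun h q]

theorem isCanonical_congr_middle {γ α β β' : List σ}
    (H₁ : ∀ q, M₁.evalFrom q β' = M₁.evalFrom q β) (H₂ : ∀ q, M₂.evalFrom q β' = M₂.evalFrom q β) :
    IsCanonical bar κ M₁.accepts M₂.accepts γ α β' ↔
      IsCanonical bar κ M₁.accepts M₂.accepts γ α β := by
  simp only [IsCanonical, DFA.mem_accepts, DFA.eval, DFA.evalFrom_of_append, H₁, H₂]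

theorem IsCanonical.of_congr_outer {γ γ' α β : List σ}
    (h : IsCanonical bar κ M₁.accepts M₂.accepts γ α β)
    (H₁ : ∀ q, M₁.evalFrom q γ' = M₁.evalFrom q γ)
    (H₂ : ∀ q, M₂.evalFrom q (ovr bar γ') = M₂.evalFrom q (ovr bar γ))
    (H₃ : ∀ v, v <+: ovr bar γ' → v ≠ [] → ∃ v₀, v₀ <+: ovr bar γ ∧ v₀ ≠ [] ∧
      M₁.eval (γ ++ α ++ β ++ ovr bar α ++ v) = M₁.eval (γ ++ α ++ β ++ ovr bar α ++ v₀))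
    (H₄ : ∀ v, v <:+ γ' → v ≠ [] → ∃ v₀, v₀ <:+ γ ∧ v₀ ≠ [] ∧
      M₂.eval (v ++ (α ++ β ++ ovr bar α ++ ovr bar γ)) =
        M₂.eval (v₀ ++ (α ++ β ++ ovr bar α ++ ovr bar γ))) :
    IsCanonical bar κ M₁.accepts M₂.accepts γ' α β := by
  obtain ⟨hα, hmem, hpre, hsuf⟩ := h
  refine ⟨hα, ?_, fun v hv hv₁ => ?_, fun v hv hv₂ => ?_⟩
  · simpa only [DFA.mem_accepts, DFA.eval, DFA.evalFrom_of_append, H₁, H₂] using hmem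
  · by_contra hne
    obtain ⟨v₀, hv₀, hne₀, heq⟩ := H₃ v hv hne
    refine hne₀ (hpre v₀ hv₀ ?_)
    simp only [DFA.mem_accepts, DFA.eval, DFA.evalFrom_of_append, H₁] at hv₁ heq ⊢
    rwa [← heq]
  · by_contra hne
    obtain ⟨v₀, hv₀, hne₀, heq⟩ := H₄ v hv hne
    refine hne₀ (hsuf v₀ hv₀ ?_)
    simp only [DFA.mem_accepts, DFA.eval, DFA.evalFrom_of_append, H₂] at hv₂ heq ⊢
    rwa [← heq]

variable (bar M₁ M₂) in
/-- What decides the canonicity of `(x ++ z, α, β)` once the outer part is cut at `x`: the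
action of `x` on `M₁` and of `ovr bar x` on `M₂` (membership), the `M₁`-state at the mirror image
of the cut (maximality of the `L1`-prefix), and the action on `M₂` of everything after the cut
(maximality of the `L2`-suffix). -/
def outerProfile (α β x z : List σ) : (Q₁ → Q₁) × Q₁ × (Q₂ → Q₂) × (Q₂ → Q₂) :=
  (fun q => M₁.evalFrom q x, M₁.eval (x ++ z ++ α ++ β ++ ovr bar α ++ ovr bar z),
    fun q => M₂.evalFrom q (z ++ α ++ β ++ ovr bar α ++ ovr bar (x ++ z)),
    fun q => M₂.evalFrom q (ovr bar x))

theorem IsCanonical.cut_outer {x y z α β : List σ}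
    (h : IsCanonical bar κ M₁.accepts M₂.accepts (x ++ y ++ z) α β)
    (hprof : outerProfile bar M₁ M₂ α β x (y ++ z) = outerProfile bar M₁ M₂ α β (x ++ y) z) :
    IsCanonical bar κ M₁.accepts M₂.accepts (x ++ z) α β := by
  simp only [outerProfile, Prod.mk.injEq] at hprof
  obtain ⟨hA, hB, hC, hD⟩ := hprof
  refine h.of_congr_outer (evalFrom_append_cut hA z) (fun q => ?_) (fun v hv hne => ?_)
    (fun v hv hne => ?_)
  · simp only [ovr_append, DFA.evalFrom_of_append] at hD ⊢
    exact congrFun hD _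
  · rw [ovr_append] at hv
    rcases prefix_append_cases hv with hv | ⟨w, hw, rfl⟩
    · exact ⟨v, by simpa using List.prefix_append_of_prefix hv, hne, rfl⟩
    refine ⟨ovr bar (y ++ z) ++ w, ?_, by simp_all, ?_⟩
    · rw [List.append_assoc, ovr_append bar x]
      exact (List.prefix_append_right_inj _).2 hw
    · simp only [← List.append_assoc] at hB ⊢
      rw [eval_append _ _ w, eval_append _ _ w, hB]
  · rcases suffix_append_cases hv with hv | ⟨w, hw, rfl⟩
    · exact ⟨v, List.suffix_append_of_suffix hv, hne, rfl⟩
    refine ⟨w ++ (y ++ z), ?_, by simp_all, ?_⟩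
    · rw [List.append_assoc]
      exact List.suffix_append_self_iff.2 hw
    · simp only [List.append_assoc] at hC ⊢
      rw [eval_append, eval_append]
      exact (congrFun hC _).symm

end Automata

section Regular
variable {bar : σ → σ} {κ : ℕ} {L1 L2 : Language σ}

theorem exists_isCanonical_middle_length_lt (h1 : L1.IsRegular) (h2 : L2.IsRegular) :
    ∃ K, ∀ γ α β, IsCanonical bar κ L1 L2 γ α β →
      ∃ β', IsCanonical bar κ L1 L2 γ α β' ∧ β'.length < K := by
  classical
  obtain ⟨Q₁, _, M₁, rfl⟩ := h1
  obtain ⟨Q₂, _, M₂, rfl⟩ := h2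
  refine ⟨_, fun γ α β h => exists_length_lt_of_forall_cut
    (fun x _ => ((fun q => M₁.evalFrom q x), fun q => M₂.evalFrom q x))
    (fun x y z hP hprof => ?_) h⟩
  obtain ⟨h₁, h₂⟩ := Prod.mk.inj hprof
  exact (isCanonical_congr_middle (evalFrom_append_cut h₁ z) (evalFrom_append_cut h₂ z)).2 hP

theorem exists_isCanonical_outer_length_lt (h1 : L1.IsRegular) (h2 : L2.IsRegular) :
    ∃ K, ∀ γ α β, IsCanonical bar κ L1 L2 γ α β →
      ∃ γ', IsCanonical bar κ L1 L2 γ' α β ∧ γ'.length < K := by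
  classical
  obtain ⟨Q₁, _, M₁, rfl⟩ := h1
  obtain ⟨Q₂, _, M₂, rfl⟩ := h2
  exact ⟨_, fun γ α β h => exists_length_lt_of_forall_cut (outerProfile bar M₁ M₂ α β)
    (fun _ _ _ hP hprof => hP.cut_outer hprof) h⟩

end Regular

section Growth

noncomputable def wordCount (L : Language σ) (m : ℕ) : ℕ :=
  {w : List σ | w ∈ L ∧ w.length = m}.ncard

theorem growthInd_nonneg (L : Language σ) : 0 ≤ growthInd L :=
  Real.sInf_nonneg fun _ hl => hl.1

theorem growthInd_le_of_wordCount_le {L : Language σ} {l : ℝ} (c : ℝ) (hl : 0 ≤ l)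
    (h : ∀ m, (wordCount L m : ℝ) ≤ c * l ^ m) : growthInd L ≤ l :=
  csInf_le ⟨0, fun _ hl => hl.1⟩ ⟨hl, max c 1, by positivity, fun m =>
    (h m).trans (by gcongr; exact le_max_left _ _)⟩

variable [Fintype σ]

theorem wordCount_le_card_pow (L : Language σ) (m : ℕ) : wordCount L m ≤ Fintype.card σ ^ m := by
  calc wordCount L m ≤ {w : List σ | w.length = m}.ncard :=
        Set.ncard_le_ncard (fun _ hw => hw.2) (List.finite_length_eq σ m)
    _ = Fintype.card σ ^ m := by
        rw [← Nat.card_coe_set_eq, ← card_vector, ← Nat.card_eq_fintype_card]; rfl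

theorem exists_wordCount_le_of_growthInd_lt {L : Language σ} {l : ℝ} (h : growthInd L < l) :
    ∃ c, 0 < c ∧ ∀ m, (wordCount L m : ℝ) ≤ c * l ^ m := by
  have hne : {l : ℝ | 0 ≤ l ∧ ∃ c : ℝ, 0 < c ∧ ∀ m, (wordCount L m : ℝ) ≤ c * l ^ m}.Nonempty :=
    ⟨Fintype.card σ, by positivity, 1, one_pos, fun m => by
      rw [one_mul]; exact_mod_cast wordCount_le_card_pow L m⟩
  obtain ⟨l', ⟨hl', c, hc, hb⟩, hl'l⟩ := exists_lt_of_csInf_lt hne h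
  exact ⟨c, hc, fun m => (hb m).trans (by gcongr)⟩

theorem growthInd_le_pow_of_wordCount_le {A B : Language σ} (k K : ℕ)
    (h : ∀ n, wordCount A n ≤ ∑ e ∈ range K, wordCount B (k * n + e)) :
    growthInd A ≤ growthInd B ^ k := by
  suffices H : ∀ l, growthInd B < l → growthInd A ≤ l ^ k from
    ge_of_tendsto (((continuous_pow k).tendsto _).mono_left nhdsWithin_le_nhds)
      (eventually_nhdsWithin_of_forall (s := Set.Ioi _) H)
  intro l hl
  have hl0 : 0 ≤ l := (growthInd_nonneg B).trans hl.le
  obtain ⟨c, hc, hB⟩ := exists_wordCount_le_of_growthInd_lt hl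
  refine growthInd_le_of_wordCount_le (K * (c * max 1 l ^ K)) (pow_nonneg hl0 k) fun n => ?_
  calc (wordCount A n : ℝ) ≤ ∑ e ∈ range K, (wordCount B (k * n + e) : ℝ) := by exact_mod_cast h n
    _ ≤ ∑ e ∈ range K, c * max 1 l ^ K * (l ^ k) ^ n := by
        gcongr with e he
        calc (wordCount B (k * n + e) : ℝ) ≤ c * l ^ (k * n + e) := hB _
          _ = c * l ^ e * (l ^ k) ^ n := by ring
          _ ≤ c * max 1 l ^ K * (l ^ k) ^ n := by
              gcongr
              calc l ^ e ≤ max 1 l ^ e := by gcongr; exact le_max_right _ _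
                _ ≤ max 1 l ^ K := pow_le_pow_right₀ (le_max_left _ _) (mem_range.1 he).le
    _ = K * (c * max 1 l ^ K) * (l ^ k) ^ n := by rw [sum_const, card_range, nsmul_eq_mul]; ring

theorem growthInd_le_max_sqrt_of_wordCount_le {A B C : Language σ}
    (h : ∀ m, wordCount A m ≤
      ∑ i ∈ range (m / 2 + 1), wordCount B i * wordCount C (m - 2 * i)) :
    growthInd A ≤ max (growthInd C) (√(growthInd B)) := by
  refine le_of_forall_gt_imp_ge_of_dense fun l hl => ?_
  obtain ⟨hCl, hBl⟩ := max_lt_iff.1 hl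
  obtain ⟨r, hBr, hrl⟩ := exists_between hBl
  have hr0 : 0 ≤ r := (Real.sqrt_nonneg _).trans hBr.le
  have hl0 : 0 < l := hr0.trans_lt hrl
  obtain ⟨c₁, hc₁, hB⟩ := exists_wordCount_le_of_growthInd_lt (Real.lt_sq_of_sqrt_lt hBr)
  obtain ⟨c₂, hc₂, hC⟩ := exists_wordCount_le_of_growthInd_lt hCl
  -- the factors `r ^ (2 * i)` contributed by `B` decay geometrically relative to `l ^ (2 * i)`
  set q := (r / l) ^ 2 with hq
  have hq0 : 0 ≤ q := sq_nonneg _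
  have hq1 : q < 1 := pow_lt_one₀ (by positivity) ((div_lt_one hl0).2 hrl) two_ne_zero
  refine growthInd_le_of_wordCount_le (c₁ * c₂ / (1 - q)) hl0.le fun m => ?_
  calc (wordCount A m : ℝ)
      ≤ ∑ i ∈ range (m / 2 + 1), (wordCount B i : ℝ) * wordCount C (m - 2 * i) := by
        exact_mod_cast h m
    _ ≤ ∑ i ∈ range (m / 2 + 1), c₁ * (r ^ 2) ^ i * (c₂ * l ^ (m - 2 * i)) := by
        gcongr with i
        exacts [hB i, hC _]
    _ = c₁ * c₂ * l ^ m * ∑ i ∈ range (m / 2 + 1), q ^ i := by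
        rw [mul_sum]
        refine sum_congr rfl fun i hi => ?_
        have hlm : l ^ m = l ^ (2 * i) * l ^ (m - 2 * i) := by
          rw [← pow_add]; congr 1; have := mem_range.1 hi; omega
        rw [hlm, hq, div_pow, ← pow_mul, div_pow, ← pow_mul]
        field_simp
        ring
    _ ≤ c₁ * c₂ * l ^ m * (1 - q)⁻¹ := by
        refine mul_le_mul_of_nonneg_left ?_ (by positivity)
        have := geom_sum_Ico_le_of_lt_one (m := 0) (n := m / 2 + 1) hq0 hq1
        rwa [← range_eq_Ico, pow_zero, one_div] at this
    _ = c₁ * c₂ / (1 - q) * l ^ m := by ring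

end Growth

section Counting

theorem ncard_le_ncard_of_rel {α β : Type*} {A : Set α} {B : Set β} (R : α → β → Prop)
    (hB : B.Finite) (hex : ∀ a ∈ A, ∃ b ∈ B, R a b) (hinj : ∀ a a' b, R a b → R a' b → a = a') :
    A.ncard ≤ B.ncard := by
  choose f hfB hfR using hex
  have := hB.to_subtype
  exact Nat.card_le_card_of_injective (fun a : A => (⟨f a a.2, hfB a a.2⟩ : B))
    fun a a' h => by
      have h' : f a a.2 = f a' a'.2 := congrArg Subtype.val h
      exact Subtype.ext (hinj _ _ _ (hfR a a.2) (h' ▸ hfR a' a'.2))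

variable [Fintype σ] {bar : σ → σ} {κ : ℕ} {L1 L2 : Language σ}

theorem finite_setOf_mem_length_eq (L : Language σ) (m : ℕ) :
    {w : List σ | w ∈ L ∧ w.length = m}.Finite :=
  (List.finite_length_eq σ m).subset fun _ hw => hw.2

theorem wordCount_hairpinCompletion_le (m : ℕ) :
    wordCount (hairpinCompletion bar κ L1 L2) m ≤ ∑ i ∈ range (m / 2 + 1),
      wordCount (MGP bar κ L1 L2) i * wordCount (Mid bar κ L1 L2) (m - 2 * i) := by
  calc wordCount (hairpinCompletion bar κ L1 L2) m
      ≤ (⋃ i ∈ range (m / 2 + 1), {p | p ∈ MGP bar κ L1 L2 ∧ p.length = i} ×ˢ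
          {β | β ∈ Mid bar κ L1 L2 ∧ β.length = m - 2 * i}).ncard := by
        refine ncard_le_ncard_of_rel (fun π pβ => π = pβ.1 ++ pβ.2 ++ ovr bar pβ.1)
          ((finite_toSet _).biUnion fun i _ =>
            (finite_setOf_mem_length_eq _ _).prod (finite_setOf_mem_length_eq _ _))
          (fun π ⟨hπ, hm⟩ => ?_) (by rintro _ _ _ rfl rfl; rfl)
        obtain ⟨γ, α, β, hc⟩ := exists_canonFact hπ
        have hlen := canonFact_length_eq hc
        refine ⟨(γ ++ α, β), Set.mem_iUnion₂.2 ⟨(γ ++ α).length, ?_, ?_⟩, by rw [hc.1]; simp⟩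
        · rw [mem_range, List.length_append, hc.2.1]
          omega
        · refine ⟨⟨⟨π, γ, α, β, hπ, hc, rfl⟩, rfl⟩, ⟨π, γ, α, hπ, hc⟩, ?_⟩
          simp only [List.length_append, hc.2.1]
          omega
    _ ≤ _ := set_ncard_biUnion_le _ _
    _ = _ := by simp only [Set.ncard_prod, wordCount]

theorem exists_wordCount_Mid_le (h1 : L1.IsRegular) (h2 : L2.IsRegular) :
    ∃ K, ∀ n, wordCount (Mid bar κ L1 L2) n ≤
      ∑ e ∈ range K, wordCount (hairpinCompletion bar κ L1 L2) (n + e) := by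
  obtain ⟨K, hK⟩ := exists_isCanonical_outer_length_lt (bar := bar) (κ := κ) h1 h2
  refine ⟨2 * K + 2 * κ, fun n => ?_⟩
  calc wordCount (Mid bar κ L1 L2) n
      ≤ (⋃ e ∈ range (2 * K + 2 * κ),
          {π | π ∈ hairpinCompletion bar κ L1 L2 ∧ π.length = n + e}).ncard := by
        refine ncard_le_ncard_of_rel (fun β π => ∃ γ α, CanonFact bar κ L1 L2 π γ α β)
          ((finite_toSet _).biUnion fun e _ => finite_setOf_mem_length_eq _ _)
          (fun β ⟨hβ, hn⟩ => ?_)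
          (fun _ _ _ ⟨_, _, h⟩ ⟨_, _, h'⟩ => (canonFact_unique h h').2.2)
        obtain ⟨π, γ, α, -, hc⟩ := hβ
        obtain ⟨γ', hγ', hlt⟩ := hK γ α β (canonFact_iff.1 hc).2
        have hc' := canonFact_iff.2 ⟨rfl, hγ'⟩
        have hlen := canonFact_length_eq hc'
        refine ⟨_, Set.mem_iUnion₂.2 ⟨2 * γ'.length + 2 * κ, mem_range.2 (by omega),
          canonFact_mem_hairpinCompletion hc', by omega⟩, γ', α, hc'⟩
    _ ≤ _ := set_ncard_biUnion_le _ _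

theorem exists_wordCount_MGP_le (h1 : L1.IsRegular) (h2 : L2.IsRegular) :
    ∃ K, ∀ n, wordCount (MGP bar κ L1 L2) n ≤
      ∑ e ∈ range K, wordCount (hairpinCompletion bar κ L1 L2) (2 * n + e) := by
  obtain ⟨K, hK⟩ := exists_isCanonical_middle_length_lt (bar := bar) (κ := κ) h1 h2
  refine ⟨K, fun n => ?_⟩
  calc wordCount (MGP bar κ L1 L2) n
      ≤ (⋃ e ∈ range K,
          {π | π ∈ hairpinCompletion bar κ L1 L2 ∧ π.length = 2 * n + e}).ncard := by
        refine ncard_le_ncard_of_rel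
          (fun p π => ∃ γ α β, CanonFact bar κ L1 L2 π γ α β ∧ p = γ ++ α)
          ((finite_toSet _).biUnion fun e _ => finite_setOf_mem_length_eq _ _)
          (fun p ⟨hp, hn⟩ => ?_) ?_
        · obtain ⟨π, γ, α, β, -, hc, rfl⟩ := hp
          obtain ⟨β', hβ', hlt⟩ := hK γ α β (canonFact_iff.1 hc).2
          have hc' := canonFact_iff.2 ⟨rfl, hβ'⟩
          have hlen := canonFact_length_eq hc'
          rw [List.length_append, hc.2.1] at hn
          refine ⟨_, Set.mem_iUnion₂.2 ⟨β'.length, mem_range.2 hlt,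
            canonFact_mem_hairpinCompletion hc', by omega⟩, γ, α, β', hc', rfl⟩
        · rintro _ _ _ ⟨_, _, _, h, rfl⟩ ⟨_, _, _, h', rfl⟩
          obtain ⟨rfl, rfl, -⟩ := canonFact_unique h h'
          rfl
    _ ≤ _ := set_ncard_biUnion_le _ _

end Counting

end HairpinCompletion

open HairpinCompletion

theorem growth_of_hairpin_completion_eq_general
    {σ : Type} [Fintype σ]
    (bar : σ → σ)
    (κ : ℕ)
    (L1 L2 : Language σ) (h1 : L1.IsRegular) (h2 : L2.IsRegular) :
    growthInd (hairpinCompletion bar κ L1 L2) =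
      max (growthInd (Mid bar κ L1 L2))
        (Real.sqrt (growthInd (MGP bar κ L1 L2))) := by
  refine le_antisymm (growthInd_le_max_sqrt_of_wordCount_le wordCount_hairpinCompletion_le)
    (max_le ?_ ?_)
  · obtain ⟨K, hK⟩ := exists_wordCount_Mid_le (bar := bar) (κ := κ) h1 h2
    simpa using growthInd_le_pow_of_wordCount_le 1 K (by simpa using hK)
  · obtain ⟨K, hK⟩ := exists_wordCount_MGP_le (bar := bar) (κ := κ) h1 h2
    exact Real.sqrt_le_iff.2 ⟨growthInd_nonneg _, growthInd_le_pow_of_wordCount_le 2 K hK⟩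

theorem growth_of_hairpin_completion_eq
    {σ : Type} [Fintype σ] (hσ : 2 ≤ Fintype.card σ)
    (bar : σ → σ) (hbar : ∀ a, bar (bar a) = a)
    (κ : ℕ) (hκ : 1 ≤ κ)
    (L1 L2 : Language σ) (h1 : L1.IsRegular) (h2 : L2.IsRegular) :
    growthInd (hairpinCompletion bar κ L1 L2) =
      max (growthInd (Mid bar κ L1 L2))
        (Real.sqrt (growthInd (MGP bar κ L1 L2))) :=
  growth_of_hairpin_completion_eq_general bar κ L1 L2 h1 h2
end
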